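/- arXiv:1811.10331 — 8 statements merged into one kernel-verified Lean document; each statement's English description precedes it below -/
import Mathlib

section
/- Let C ⊆ ℝⁿ be a nonempty open convex set and let H : C → S⁺⁺(n) (the symmetric positive definite n×n matrices) be of class C¹. Then the following are equivalent: (i) for every y ∈ C there exists a C¹ function φ_y : C → ℝ whose Euclidean gradient satisfies ∇φ_y(x) = H(x)(x − y) for all x ∈ C (i.e. the vector fields x ↦ x − y are gradient fields for the Riemannian metric (u,v)ₓ = ⟨H(x)u, v⟩); (ii) there exists a strictly convex function h ∈ C³(C) such that H(x) = ∇²h(x) for all x ∈ C. Moreover, when (ii) holds, the function D_h(y,x) = h(y) − h(x) − ⟨∇h(x), y − x⟩ satisfies: for every y ∈ C, the Euclidean gradient of x ↦ D_h(y,x) at x ∈ C equals ∇²h(x)(x − y). -/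
noncomputable section
open Set Filter Topology Matrix

abbrev E (n : ℕ) := EuclideanSpace ℝ (Fin n)

def matVec {n : ℕ} (M : Matrix (Fin n) (Fin n) ℝ) (v : E n) : E n := WithLp.toLp 2 (M.mulVec v)

def matCLM {n : ℕ} (M : Matrix (Fin n) (Fin n) ℝ) : E n →L[ℝ] E n :=
  LinearMap.toContinuousLinearMap (Matrix.toEuclideanLin M)

/-!
Write `A x` for the operator of `H x`. The gradient of `φ_{y₀} - φ_{y₀ + ε eⱼ}` is `ε A x eⱼ`, so
these differences assemble, after dividing by `ε`, into a map `g` with `Dg = A`. Since `A` is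
symmetric, the gradient of `x ↦ ⟪g x, x - y₀⟫` is `A x (x - y₀) + g x`, so
`h x = ⟪g x, x - y₀⟫ - φ_{y₀} x` has gradient `g` and Hessian `A` without integrating `g` along
segments. Strict convexity follows from the positive second derivative along segments. The same
gradient computation shows that `D_h(y, ·)` has gradient `∇²h x (x - y)`, which gives the converse
and the last claim.
-/

open InnerProductSpace RealInnerProductSpace

theorem contDiffOn_succ_of_hasFDerivAt {𝕜 : Type*} [NontriviallyNormedField 𝕜]
    {V W : Type*} [NormedAddCommGroup V] [NormedSpace 𝕜 V] [NormedAddCommGroup W]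
    [NormedSpace 𝕜 W] {s : Set V} (hs : IsOpen s) {m : ℕ} {f : V → W} {f' : V → V →L[𝕜] W}
    (hf : ∀ x ∈ s, HasFDerivAt f (f' x) x) (hf' : ContDiffOn 𝕜 m f' s) :
    ContDiffOn 𝕜 (m + 1) f s :=
  (contDiffOn_succ_iff_hasFDerivWithinAt_of_uniqueDiffOn hs.uniqueDiffOn).2
    ⟨by simp, f', hf', fun x hx => (hf x hx).hasFDerivWithinAt⟩

section InnerProductSpace

variable {F : Type*} [NormedAddCommGroup F] [InnerProductSpace ℝ F] [CompleteSpace F]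

theorem contDiffOn_succ_of_hasGradientAt {s : Set F} (hs : IsOpen s) {m : ℕ} {f : F → ℝ}
    {g : F → F} (hf : ∀ x ∈ s, HasGradientAt f (g x) x) (hg : ContDiffOn ℝ m g s) :
    ContDiffOn ℝ (m + 1) f s :=
  contDiffOn_succ_of_hasFDerivAt hs (fun x hx => hasGradientAt_iff_hasFDerivAt.1 (hf x hx))
    ((innerSL ℝ).contDiff.comp_contDiffOn hg)

theorem hasFDerivAt_sum_smul_of_hasGradientAt {ι : Type*} [Fintype ι]
    (b : OrthonormalBasis ι ℝ F) {A : F →L[ℝ] F} (hA : (A : F →ₗ[ℝ] F).IsSymmetric)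
    {ψ : ι → F → ℝ} {x : F} (hψ : ∀ j, HasGradientAt (ψ j) (A (b j)) x) :
    HasFDerivAt (fun z => ∑ j, ψ j z • b j) A x := by
  refine (HasFDerivAt.fun_sum fun j _ =>
    (hasGradientAt_iff_hasFDerivAt.1 (hψ j)).smul_const (b j)).congr_fderiv ?_
  ext v
  simp only [FunLike.coe_sum, Finset.sum_apply, ContinuousLinearMap.smulRight_apply,
    toDual_apply_apply]
  simp_rw [← ContinuousLinearMap.coe_coe A, hA _ v]
  exact b.sum_repr' _

theorem hasGradientAt_inner_sub {g : F → F} {A : F →L[ℝ] F} (hA : (A : F →ₗ[ℝ] F).IsSymmetric)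
    {x : F} (hg : HasFDerivAt g A x) (y : F) :
    HasGradientAt (fun z => ⟪g z, z - y⟫) (A (x - y) + g x) x := by
  rw [hasGradientAt_iff_hasFDerivAt]
  refine (hg.inner ℝ ((hasFDerivAt_id x).sub_const y)).congr_fderiv ?_
  ext v
  simp only [ContinuousLinearMap.comp_apply, ContinuousLinearMap.prod_apply,
    fderivInnerCLM_apply, ContinuousLinearMap.id_apply, toDual_apply_apply, inner_add_left]
  rw [← ContinuousLinearMap.coe_coe A, hA, id_eq, real_inner_comm _ v, add_comm]

theorem hasGradientAt_inner_sub_sub {g : F → F} {A : F →L[ℝ] F}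
    (hA : (A : F →ₗ[ℝ] F).IsSymmetric) {φ : F → ℝ} {x y : F} (hg : HasFDerivAt g A x)
    (hφ : HasGradientAt φ (A (x - y)) x) :
    HasGradientAt (fun z => ⟪g z, z - y⟫ - φ z) (g x) x := by
  rw [hasGradientAt_iff_hasFDerivAt]
  refine ((hasGradientAt_iff_hasFDerivAt.1 (hasGradientAt_inner_sub hA hg y)).fun_sub
    (hasGradientAt_iff_hasFDerivAt.1 hφ)).congr_fderiv ?_
  rw [← map_sub, add_sub_cancel_left]

theorem hasGradientAt_bregman {h : F → ℝ} {A : F →L[ℝ] F} (hA : (A : F →ₗ[ℝ] F).IsSymmetric)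
    {x : F} (hh : DifferentiableAt ℝ h x) (hgrad : HasFDerivAt (gradient h) A x) (y : F) :
    HasGradientAt (fun z => h y - h z - ⟪gradient h z, y - z⟫) (A (x - y)) x := by
  have hD : (fun z => h y - h z - ⟪gradient h z, y - z⟫) =
      fun z => h y - h z + ⟪gradient h z, z - y⟫ := by
    ext z
    rw [← neg_sub z y, inner_neg_right, sub_neg_eq_add]
  rw [hD, hasGradientAt_iff_hasFDerivAt]
  refine (((hasFDerivAt_const (h y) x).fun_sub
    (hasGradientAt_iff_hasFDerivAt.1 hh.hasGradientAt)).fun_add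
    (hasGradientAt_iff_hasFDerivAt.1 (hasGradientAt_inner_sub hA hgrad y))).congr_fderiv ?_
  ext v
  simp

theorem strictConvexOn_of_hasFDerivAt_gradient {s : Set F} (hs : Convex ℝ s) {f : F → ℝ}
    {g : F → F} {A : F → F →L[ℝ] F} (hf : ∀ x ∈ s, HasGradientAt f (g x) x)
    (hg : ∀ x ∈ s, HasFDerivAt g (A x) x) (hA : ∀ x ∈ s, ∀ v ≠ 0, 0 < ⟪A x v, v⟫) :
    StrictConvexOn ℝ s f := by
  refine ⟨hs, fun x hx z hz hxz a b ha hb hab => ?_⟩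
  set c : ℝ → F := ⇑(AffineMap.lineMap (k := ℝ) x z)
  have hc : ∀ t ∈ Icc (0 : ℝ) 1, c t ∈ s := fun t ht => hs.lineMap_mem hx hz ht
  have hψ : ∀ t ∈ Icc (0 : ℝ) 1, HasDerivAt (f ∘ c) ⟪g (c t), z - x⟫ t := fun t ht =>
    (hasGradientAt_iff_hasFDerivAt.1 (hf _ (hc t ht))).comp_hasDerivAt t
      AffineMap.hasDerivAt_lineMap
  have hψ' : ∀ t ∈ Icc (0 : ℝ) 1,
      HasDerivAt (fun t => ⟪g (c t), z - x⟫) ⟪A (c t) (z - x), z - x⟫ t := fun t ht => by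
    simpa using ((hg _ (hc t ht)).comp_hasDerivAt t AffineMap.hasDerivAt_lineMap).inner ℝ
      (hasDerivAt_const t (z - x))
  have hconv : StrictConvexOn ℝ (Icc 0 1) (f ∘ c) := by
    refine strictConvexOn_of_deriv2_pos (convex_Icc 0 1)
      (fun t ht => (hψ t ht).continuousAt.continuousWithinAt) fun t ht => ?_
    rw [interior_Icc] at ht
    have hderiv : deriv (f ∘ c) =ᶠ[𝓝 t] fun t => ⟪g (c t), z - x⟫ :=
      eventually_of_mem (Ioo_mem_nhds ht.1 ht.2) fun u hu => (hψ u (Ioo_subset_Icc_self hu)).deriv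
    rw [Function.iterate_succ_apply, Function.iterate_one, hderiv.deriv_eq,
      (hψ' t (Ioo_subset_Icc_self ht)).deriv]
    exact hA _ (hc t (Ioo_subset_Icc_self ht)) _ (sub_ne_zero.2 hxz.symm)
  obtain rfl : a = 1 - b := by linarith
  simpa [c, AffineMap.lineMap_apply_module] using
    hconv.2 (left_mem_Icc.2 zero_le_one) (right_mem_Icc.2 zero_le_one) zero_ne_one ha hb hab

end InnerProductSpace

section FiniteDimensional

variable {F : Type*} [NormedAddCommGroup F] [InnerProductSpace ℝ F] [FiniteDimensional ℝ F]

theorem exists_hasFDerivAt_of_forall_hasGradientAt_sub {s t : Set F} {A : F → F →L[ℝ] F}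
    (hA : ∀ x ∈ s, (A x : F →ₗ[ℝ] F).IsSymmetric) {y₀ : F} (ht : t ∈ 𝓝 y₀)
    (hφ : ∀ y ∈ t, ∃ φ : F → ℝ, ∀ x ∈ s, HasGradientAt φ (A x (x - y)) x) :
    ∃ g : F → F, ∀ x ∈ s, HasFDerivAt g (A x) x := by
  obtain ⟨ε, hε, hball⟩ := Metric.mem_nhds_iff.1 ht
  set b := stdOrthonormalBasis ℝ F
  have hmem : ∀ j, y₀ + (ε / 2) • b j ∈ t := fun j => hball <| by
    rw [Metric.mem_ball, dist_self_add_left, norm_smul, b.orthonormal.1 j,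
      Real.norm_of_nonneg (by positivity)]
    linarith
  obtain ⟨φ₀, hφ₀⟩ := hφ y₀ (mem_of_mem_nhds ht)
  choose φ hφ using fun j => hφ _ (hmem j)
  -- `(φ₀ - φ j) / (ε / 2)` has gradient `A x (b j)`, the `j`-th column of `A x`
  refine ⟨fun z => ∑ j, ((ε / 2)⁻¹ * (φ₀ z - φ j z)) • b j, fun x hx =>
    hasFDerivAt_sum_smul_of_hasGradientAt b (hA x hx) fun j => ?_⟩
  rw [hasGradientAt_iff_hasFDerivAt]
  refine (((hasGradientAt_iff_hasFDerivAt.1 (hφ₀ x hx)).fun_sub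
    (hasGradientAt_iff_hasFDerivAt.1 (hφ j x hx))).const_mul _).congr_fderiv ?_
  have hdiff : (x - y₀) - (x - (y₀ + (ε / 2) • b j)) = (ε / 2) • b j := by abel
  rw [← map_sub, ← map_sub, hdiff, map_smul, map_smul, smul_smul,
    inv_mul_cancel₀ (by positivity), one_smul]

end FiniteDimensional

section Matrix

variable {n : ℕ}

theorem isSymmetric_matCLM {M : Matrix (Fin n) (Fin n) ℝ} (hM : M.IsHermitian) :
    (matCLM M : E n →ₗ[ℝ] E n).IsSymmetric :=
  Matrix.isSymmetric_toEuclideanLin_iff.2 hM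

theorem inner_matCLM_self_pos {M : Matrix (Fin n) (Fin n) ℝ} (hM : M.PosDef) {v : E n}
    (hv : v ≠ 0) : 0 < ⟪matCLM M v, v⟫ := by
  have hpos := hM.dotProduct_mulVec_pos (x := v.ofLp) (by simpa using hv)
  rw [star_trivial] at hpos
  rwa [EuclideanSpace.inner_eq_star_dotProduct, star_trivial]

theorem contDiffOn_matCLM {m : WithTop ℕ∞} {s : Set (E n)} {H : E n → Matrix (Fin n) (Fin n) ℝ}
    (hH : ∀ i j, ContDiffOn ℝ m (fun x => H x i j) s) :
    ContDiffOn ℝ m (fun x => matCLM (H x)) s := by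
  let L : (Fin n → Fin n → ℝ) →ₗ[ℝ] (E n →L[ℝ] E n) :=
    LinearMap.toContinuousLinearMap.toLinearMap ∘ₗ Matrix.toEuclideanLin.toLinearMap ∘ₗ
      (Matrix.ofLinearEquiv ℝ).toLinearMap
  exact (LinearMap.toContinuousLinearMap L).contDiff.comp_contDiffOn
    (contDiffOn_pi.2 fun i => contDiffOn_pi.2 fun j => hH i j)

end Matrix

/-- Let `C ⊆ ℝⁿ` be a nonempty open convex set and `H : C → S⁺⁺(n)` of
class `C¹`.  The vector fields `x ↦ x − y`, `y ∈ C`, are gradient vector fields for the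
Riemannian metric `(u,v)ₓ = ⟨H(x)u,v⟩` (i.e. for every `y ∈ C` there is a `C¹` function
`φ_y` with Euclidean gradient `∇φ_y(x) = H(x)(x−y)`) if and only if there is a strictly
convex `h ∈ C³(C)` with `∇²h = H` on `C`.  Moreover, in that case the `D`-function
`D_h(y,x) = h(y) − h(x) − ⟨∇h(x), y − x⟩` satisfies `∇ₓ D_h(y,·)(x) = ∇²h(x)(x − y)`. -/
theorem stmt0 (n : ℕ) (C : Set (E n)) (H : E n → Matrix (Fin n) (Fin n) ℝ)
    (hCne : C.Nonempty) (hCopen : IsOpen C) (hCconv : Convex ℝ C)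
    (hHC1 : ∀ i j : Fin n, ContDiffOn ℝ 1 (fun x => H x i j) C)
    (hHpos : ∀ x ∈ C, (H x).PosDef) :
    ((∀ y ∈ C, ∃ φ : E n → ℝ, ContDiffOn ℝ 1 φ C ∧
        ∀ x ∈ C, HasGradientAt φ (matVec (H x) (x - y)) x)
      ↔
      (∃ h : E n → ℝ, ContDiffOn ℝ 3 h C ∧ StrictConvexOn ℝ C h ∧
        ∀ x ∈ C, HasFDerivAt (gradient h) (matCLM (H x)) x))
    ∧
    (∀ h : E n → ℝ, ContDiffOn ℝ 3 h C → StrictConvexOn ℝ C h →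
      (∀ x ∈ C, HasFDerivAt (gradient h) (matCLM (H x)) x) →
      ∀ y ∈ C, ∀ x ∈ C,
        HasGradientAt (fun z => h y - h z - (inner ℝ (gradient h z) (y - z) : ℝ))
          (matVec (H x) (x - y)) x) := by
  have hsymm : ∀ x ∈ C, (matCLM (H x) : E n →ₗ[ℝ] E n).IsSymmetric := fun x hx =>
    isSymmetric_matCLM (hHpos x hx).isHermitian
  have hHCLM : ContDiffOn ℝ 1 (fun x => matCLM (H x)) C := contDiffOn_matCLM hHC1
  have hbregman : ∀ h : E n → ℝ, ContDiffOn ℝ 3 h C →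
      (∀ x ∈ C, HasFDerivAt (gradient h) (matCLM (H x)) x) → ∀ y ∈ C, ∀ x ∈ C,
        HasGradientAt (fun z => h y - h z - ⟪gradient h z, y - z⟫) (matVec (H x) (x - y)) x :=
    fun h hh hgrad y _ x hx => hasGradientAt_bregman (hsymm x hx)
      ((hh.contDiffAt (hCopen.mem_nhds hx)).differentiableAt (by norm_num)) (hgrad x hx) y
  refine ⟨⟨fun hi => ?_, fun ⟨h, hh, _, hgrad⟩ y hy => ?_⟩, fun h hh _ => hbregman h hh⟩
  · obtain ⟨y₀, hy₀⟩ := hCne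
    obtain ⟨g, hg⟩ := exists_hasFDerivAt_of_forall_hasGradientAt_sub hsymm (hCopen.mem_nhds hy₀)
      fun y hy => (hi y hy).imp fun _ => And.right
    obtain ⟨φ₀, -, hφ₀⟩ := hi y₀ hy₀
    have hgrad : ∀ x ∈ C, HasGradientAt (fun z => ⟪g z, z - y₀⟫ - φ₀ z) (g x) x := fun x hx =>
      hasGradientAt_inner_sub_sub (hsymm x hx) (hg x hx) (hφ₀ x hx)
    have hg2 : ContDiffOn ℝ 2 g C := contDiffOn_succ_of_hasFDerivAt hCopen hg hHCLM
    refine ⟨_, contDiffOn_succ_of_hasGradientAt hCopen hgrad hg2,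
      strictConvexOn_of_hasFDerivAt_gradient hCconv hgrad hg fun x hx _ hv =>
        inner_matCLM_self_pos (hHpos x hx) hv,
      fun x hx => (hg x hx).congr_of_eventuallyEq ?_⟩
    filter_upwards [hCopen.mem_nhds hx] with z hz using (hgrad z hz).gradient
  · have hgrad1 : ContDiffOn ℝ 1 (gradient h) C :=
      contDiffOn_succ_of_hasFDerivAt (m := 0) hCopen hgrad (contDiffOn_zero.2 hHCLM.continuousOn)
    exact ⟨_, (contDiffOn_const.sub (hh.of_le (by norm_num))).sub
      (hgrad1.inner ℝ (contDiffOn_const.sub contDiffOn_id)), hbregman h hh hgrad y hy⟩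
end
end

section
/- Let x : (T_m, T_M) → ℝⁿ be locally absolutely continuous with x(t) ∈ F = C ∩ {z : Az = b} for all t, and suppose that for almost every t ∈ (T_m, T_M) the map t ↦ ∇h(x(t)) is differentiable at t with (d/dt)∇h(x(t)) + ∇f(x(t)) ∈ Im Aᵀ. Then x is of class C¹ and satisfies for every t ∈ (T_m, T_M) the equation ẋ(t) = −∇²h(x(t))⁻¹[I − Aᵀ(A∇²h(x(t))⁻¹Aᵀ)⁻¹A∇²h(x(t))⁻¹]∇f(x(t)). Conversely, any C¹ solution of this equation with values in F satisfies the above differential inclusion. -/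
noncomputable section
open Set Filter Topology Matrix MeasureTheory

/-- The steepest descent vector field
`x ↦ −H(x)⁻¹[I − Aᵀ(A H(x)⁻¹ Aᵀ)⁻¹ A H(x)⁻¹] g(x)` for the Hessian metric. -/
def sdVF {n m : ℕ} (A : Matrix (Fin m) (Fin n) ℝ)
    (Hess : E n → Matrix (Fin n) (Fin n) ℝ) (g : E n → E n) (x : E n) : E n :=
  -(matVec ((Hess x)⁻¹ * (1 - Aᵀ * (A * (Hess x)⁻¹ * Aᵀ)⁻¹ * A * (Hess x)⁻¹)) (g x))

/-- The `D`-function (Bregman distance) of `h`: `D_h(a,y) = h(a) − h(y) − ⟨∇h(y), a − y⟩`. -/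
def Dh {n : ℕ} (h : E n → ℝ) (a y : E n) : ℝ :=
  h a - h y - (inner ℝ (gradient h y) (a - y) : ℝ)

/-!
The inverse function theorem for `∇h` (whose derivative `∇²h` is continuous and invertible
on `C`) turns the a.e. derivative of `∇h(x(t))` into an a.e. derivative
`ẋ = ∇²h(x)⁻¹ (d/dt)∇h(x)`, and differentiating `Ax = b` gives `Aẋ = 0`. Solving the linear
system `∇²h(x)ẋ + ∇f(x) ∈ Im Aᵀ`, `Aẋ = 0`, whose Schur complement `A∇²h(x)⁻¹Aᵀ` is positive
definite because `A` has full rank, shows that `ẋ` is a.e. the steepest descent field. That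
field is continuous along `x`, and the integrand of the absolutely continuous curve `x` agrees
with it a.e. (Lebesgue differentiation), so `x` is a primitive of a continuous function, hence
`C¹` with the equation everywhere. Conversely a `C¹` solution is the integral of its derivative,
and `∇²h(x)ẋ + ∇f(x) = Aᵀ(A∇²h⁻¹Aᵀ)⁻¹A∇²h⁻¹∇f(x)` by direct computation.
-/

lemma matCLM_apply {n : ℕ} (M : Matrix (Fin n) (Fin n) ℝ) (v : E n) :
    matCLM M v = matVec M v :=
  rfl

lemma continuousOn_matCLM_comp_iff {X : Type*} [TopologicalSpace X] {n : ℕ}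
    {F : X → Matrix (Fin n) (Fin n) ℝ} {s : Set X} :
    ContinuousOn (fun y => matCLM (F y)) s ↔ ContinuousOn F s :=
  ((Matrix.toEuclideanCLM (𝕜 := ℝ) (n := Fin n)).toAlgEquiv.toLinearEquiv
    |>.toContinuousLinearEquiv).comp_continuousOn_iff

def matCLE {n : ℕ} (M : Matrix (Fin n) (Fin n) ℝ) (hM : IsUnit M.det) : E n ≃L[ℝ] E n :=
  ContinuousLinearEquiv.equivOfInverse (matCLM M) (matCLM M⁻¹)
    (fun v => by simp [matCLM_apply, matVec, mulVec_mulVec, nonsing_inv_mul _ hM])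
    (fun v => by simp [matCLM_apply, matVec, mulVec_mulVec, mul_nonsing_inv _ hM])

section MatrixAlgebra

variable {ι κ : Type*} [Fintype ι] [Fintype κ]

lemma Matrix.vecMul_injective_of_rank_eq {K : Type*} [Field K] {A : Matrix κ ι K}
    (hA : A.rank = Fintype.card κ) : Function.Injective fun y => y ᵥ* A := by
  rw [Matrix.vecMul_injective_iff, linearIndependent_iff_card_eq_finrank_span, Set.finrank,
    ← Matrix.rank_eq_finrank_span_row, hA]

variable [DecidableEq ι]

lemma Matrix.PosDef.mul_inv_mul_transpose_of_rank_eq {A : Matrix κ ι ℝ} {H : Matrix ι ι ℝ}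
    (hH : H.PosDef) (hA : A.rank = Fintype.card κ) : (A * H⁻¹ * Aᵀ).PosDef := by
  simpa using hH.inv.mul_mul_conjTranspose_same (Matrix.vecMul_injective_of_rank_eq hA)

variable [DecidableEq κ] {R : Type*} [CommRing R] (A : Matrix κ ι R) (H : Matrix ι ι R)

def sdMatrix : Matrix ι ι R :=
  H⁻¹ * (1 - Aᵀ * (A * H⁻¹ * Aᵀ)⁻¹ * A * H⁻¹)

variable (g : ι → R)

lemma eq_neg_sdMatrix_mulVec_of_mulVec_add_eq (hH : IsUnit H.det)
    (hB : IsUnit (A * H⁻¹ * Aᵀ).det) {v : ι → R} {y : κ → R}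
    (hv : H *ᵥ v + g = Aᵀ *ᵥ y) (hAv : A *ᵥ v = 0) :
    v = -(sdMatrix A H *ᵥ g) := by
  have hv' : v = H⁻¹ *ᵥ (Aᵀ *ᵥ y) - H⁻¹ *ᵥ g := by
    rw [← hv, mulVec_add, add_sub_cancel_right, mulVec_mulVec, nonsing_inv_mul _ hH, one_mulVec]
  have hy : y = (A * H⁻¹ * Aᵀ)⁻¹ *ᵥ ((A * H⁻¹) *ᵥ g) := by
    have hBy : (A * H⁻¹ * Aᵀ) *ᵥ y = (A * H⁻¹) *ᵥ g := by
      rwa [hv', mulVec_sub, sub_eq_zero, mulVec_mulVec, mulVec_mulVec, mulVec_mulVec] at hAv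
    rw [← hBy, mulVec_mulVec, nonsing_inv_mul _ hB, one_mulVec]
  rw [hv', hy, sdMatrix]
  simp only [Matrix.mul_sub, Matrix.mul_one, sub_mulVec, neg_sub, mulVec_mulVec, Matrix.mul_assoc]

lemma mulVec_neg_sdMatrix_mulVec_add_eq (hH : IsUnit H.det) :
    H *ᵥ -(sdMatrix A H *ᵥ g) + g = Aᵀ *ᵥ (((A * H⁻¹ * Aᵀ)⁻¹ * (A * H⁻¹)) *ᵥ g) := by
  rw [sdMatrix, mulVec_neg, mulVec_mulVec, ← Matrix.mul_assoc, mul_nonsing_inv _ hH,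
    Matrix.one_mul, sub_mulVec, one_mulVec, neg_sub, sub_add_cancel]
  simp only [mulVec_mulVec, Matrix.mul_assoc]

end MatrixAlgebra

lemma sdVF_apply {n m : ℕ} (A : Matrix (Fin m) (Fin n) ℝ) (Hess : E n → Matrix (Fin n) (Fin n) ℝ)
    (g : E n → E n) (p : E n) : sdVF A Hess g p = -matVec (sdMatrix A (Hess p)) (g p) :=
  rfl

lemma continuous_matVec {n : ℕ} :
    Continuous fun p : Matrix (Fin n) (Fin n) ℝ × E n => matVec p.1 p.2 := by
  unfold matVec; fun_prop

lemma Matrix.continuousAt_inv_of_isUnit_det {ι K : Type*} [Fintype ι] [DecidableEq ι] [Field K]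
    [TopologicalSpace K] [IsTopologicalDivisionRing K] {M : Matrix ι ι K}
    (hM : IsUnit M.det) : ContinuousAt Inv.inv M :=
  continuousAt_matrix_inv M <| by
    rw [Ring.inverse_eq_inv']; exact continuousAt_inv₀ hM.ne_zero

lemma continuousAt_sdMatrix {ι κ : Type*} [Fintype ι] [Fintype κ] [DecidableEq ι]
    [DecidableEq κ] (A : Matrix κ ι ℝ) {H : Matrix ι ι ℝ} (hH : IsUnit H.det)
    (hB : IsUnit (A * H⁻¹ * Aᵀ).det) : ContinuousAt (sdMatrix A) H := by
  have hinv := Matrix.continuousAt_inv_of_isUnit_det hH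
  have hB' : ContinuousAt (fun N => A * N⁻¹ * Aᵀ) H :=
    ((continuous_const.matrix_mul continuous_id).matrix_mul continuous_const).continuousAt.comp
      hinv
  have hBinv : ContinuousAt (fun N => (A * N⁻¹ * Aᵀ)⁻¹) H :=
    (Matrix.continuousAt_inv_of_isUnit_det hB).comp (f := fun N => A * N⁻¹ * Aᵀ) hB'
  have hproj : ContinuousAt (fun N => Aᵀ * (A * N⁻¹ * Aᵀ)⁻¹ * A) H :=
    ((continuous_const.matrix_mul continuous_id).matrix_mul continuous_const).continuousAt.comp
      hBinv
  exact hinv.mul (continuousAt_const.sub (hproj.mul hinv))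

lemma continuousOn_sdVF {n m : ℕ} (A : Matrix (Fin m) (Fin n) ℝ)
    {Hess : E n → Matrix (Fin n) (Fin n) ℝ} {g : E n → E n} {C : Set (E n)}
    (hHess : ContinuousOn Hess C) (hg : ContinuousOn g C)
    (hH : ∀ y ∈ C, IsUnit (Hess y).det) (hB : ∀ y ∈ C, IsUnit (A * (Hess y)⁻¹ * Aᵀ).det) :
    ContinuousOn (sdVF A Hess g) C := by
  have hP : ContinuousOn (fun y => sdMatrix A (Hess y)) C := fun y hy =>
    (continuousAt_sdMatrix A (hH y hy) (hB y hy)).comp_continuousWithinAt (hHess y hy)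
  have hsd := (continuous_matVec.comp_continuousOn (hP.prodMk hg)).neg
  exact hsd.congr fun p _ => sdVF_apply A Hess g p

lemma locallyLipschitzOn_of_norm_sub_le {X Y : Type*} [SeminormedAddCommGroup X]
    [SeminormedAddCommGroup Y] {f : X → Y} {s : Set X}
    (hf : ∀ x ∈ s, ∃ ε > 0, ∃ K : ℝ, ∀ y ∈ s ∩ Metric.ball x ε, ∀ z ∈ s ∩ Metric.ball x ε,
      ‖f y - f z‖ ≤ K * ‖y - z‖) :
    LocallyLipschitzOn s f := by
  intro x hx
  obtain ⟨ε, hε, K, hK⟩ := hf x hx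
  refine ⟨K.toNNReal, s ∩ Metric.ball x ε, inter_mem_nhdsWithin s (Metric.ball_mem_nhds x hε),
    LipschitzOnWith.of_dist_le' fun y hy z hz => ?_⟩
  rw [dist_eq_norm, dist_eq_norm]
  exact hK y hy z hz

lemma ContDiff.continuous_gradient {G : Type*} [NormedAddCommGroup G] [InnerProductSpace ℝ G]
    [CompleteSpace G] {f : G → ℝ} (hf : ContDiff ℝ 1 f) : Continuous (gradient f) :=
  (InnerProductSpace.toDual ℝ G).symm.continuous.comp (hf.continuous_fderiv one_ne_zero)

lemma HasStrictFDerivAt.hasDerivAt_of_comp {G H : Type*} [NormedAddCommGroup G]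
    [NormedSpace ℝ G] [CompleteSpace G] [NormedAddCommGroup H] [NormedSpace ℝ H]
    {f : G → H} {L : G ≃L[ℝ] H} {x : ℝ → G} {t : ℝ} {w : H}
    (hf : HasStrictFDerivAt f (L : G →L[ℝ] H) (x t)) (hx : ContinuousAt x t)
    (hfx : HasDerivAt (fun s => f (x s)) w t) : HasDerivAt x (L.symm w) t := by
  have hinv := hf.to_localInverse.hasFDerivAt.comp_hasDerivAt t hfx
  refine hinv.congr_of_eventuallyEq ?_
  filter_upwards [hx.eventually hf.eventually_left_inverse] with s hs using hs.symm

lemma HasDerivAt.map_eq_zero_of_eventually_eq {G H : Type*} [NormedAddCommGroup G]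
    [NormedSpace ℝ G] [NormedAddCommGroup H] [NormedSpace ℝ H] {x : ℝ → G} {x' : G} {t : ℝ}
    (hx : HasDerivAt x x' t) (L : G →L[ℝ] H) {c : H} (hc : ∀ᶠ s in 𝓝 t, L (x s) = c) :
    L x' = 0 :=
  ((L.hasFDerivAt.comp_hasDerivAt t hx).congr_of_eventuallyEq (hc.mono fun _ h => h.symm)).unique
    (hasDerivAt_const t c)

section AbsolutelyContinuousCurve

variable {F : Type*} [NormedAddCommGroup F] [NormedSpace ℝ F]
  {x v φ : ℝ → F} {a b : ℝ}

lemma eventuallyEq_add_integral_of_Icc_mem_nhds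
    (hx : ∀ s ∈ Ioo a b, ∀ t ∈ Ioo a b, x t = x s + ∫ u in s..t, v u) {p q t : ℝ}
    (htpq : t ∈ Icc p q) (hnhds : Icc p q ∈ 𝓝 t) (hsub : Icc p q ⊆ Ioo a b) :
    x =ᶠ[𝓝 t] fun r => x p + ∫ u in p..r, v u := by
  filter_upwards [hnhds] with r hr
  exact hx p (hsub ⟨le_rfl, htpq.1.trans htpq.2⟩) r (hsub hr)

lemma continuousOn_of_eq_add_integral (hv : LocallyIntegrableOn v (Ioo a b))
    (hx : ∀ s ∈ Ioo a b, ∀ t ∈ Ioo a b, x t = x s + ∫ u in s..t, v u) :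
    ContinuousOn x (Ioo a b) := by
  intro t ht
  obtain ⟨p, q, htpq, hnhds, hsub⟩ := exists_Icc_mem_subset_of_mem_nhds (Ioo_mem_nhds ht.1 ht.2)
  have hpq : p ≤ q := htpq.1.trans htpq.2
  have hprim := intervalIntegral.continuousOn_primitive_interval (a := p) (b := q) (f := v)
    (by rw [uIcc_of_le hpq]; exact hv.integrableOn_compact_subset hsub isCompact_Icc)
  rw [uIcc_of_le hpq] at hprim
  exact ((continuousAt_const.add (hprim.continuousAt hnhds)).congr
    (eventuallyEq_add_integral_of_Icc_mem_nhds hx htpq hnhds hsub).symm).continuousWithinAt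

variable [CompleteSpace F]

lemma hasDerivAt_of_eq_add_integral_of_ae (hv : LocallyIntegrableOn v (Ioo a b))
    (hx : ∀ s ∈ Ioo a b, ∀ t ∈ Ioo a b, x t = x s + ∫ u in s..t, v u)
    (hφ : ContinuousOn φ (Ioo a b)) (hderiv : ∀ᵐ t, t ∈ Ioo a b → HasDerivAt x (φ t) t) :
    ∀ t ∈ Ioo a b, HasDerivAt x (φ t) t := by
  intro t ht
  obtain ⟨p, q, htpq, hnhds, hsub⟩ := exists_Icc_mem_subset_of_mem_nhds (Ioo_mem_nhds ht.1 ht.2)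
  have hpq : p ≤ q := htpq.1.trans htpq.2
  have hvpq : IntervalIntegrable v volume p q :=
    (intervalIntegrable_iff_integrableOn_Icc_of_le hpq).2
      (hv.integrableOn_compact_subset hsub isCompact_Icc)
  have hp : p ∈ Ioo a b := hsub ⟨le_rfl, hpq⟩
  -- Lebesgue differentiation identifies the integrand with the a.e. derivative `φ`.
  have hvφ : ∀ᵐ u, u ∈ Icc p q → v u = φ u := by
    filter_upwards [hvpq.ae_hasDerivAt_integral, hderiv] with u hvu hφu hu
    have hu' : u ∈ Ioo a b := hsub hu
    have hxu : HasDerivAt x (v u) u := by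
      refine ((hvu (by rwa [uIcc_of_le hpq]) p left_mem_uIcc).const_add (x p)).congr_of_eventuallyEq
        ?_
      filter_upwards [Ioo_mem_nhds hu'.1 hu'.2] with r hr using hx p hp r hr
    exact hxu.unique (hφu hu')
  have hxφ : x =ᶠ[𝓝 t] fun r => x p + ∫ u in p..r, φ u := by
    filter_upwards [eventuallyEq_add_integral_of_Icc_mem_nhds hx htpq hnhds hsub, hnhds]
      with r hxr hr
    rw [hxr, intervalIntegral.integral_congr_ae]
    filter_upwards [hvφ] with u hu hur
    exact hu (uIoc_subset_uIcc.trans (uIcc_subset_Icc ⟨le_rfl, hpq⟩ hr) hur)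
  have hpt : uIcc p t ⊆ Ioo a b := ordConnected_Ioo.uIcc_subset hp ht
  refine HasDerivAt.congr_of_eventuallyEq ?_ hxφ
  exact (intervalIntegral.integral_hasDerivAt_right ((hφ.mono hpt).intervalIntegrable)
    (hφ.stronglyMeasurableAtFilter isOpen_Ioo t ht)
    (hφ.continuousAt (Ioo_mem_nhds ht.1 ht.2))).const_add (x p)

lemma eq_add_integral_of_hasDerivAt (hφ : ContinuousOn φ (Ioo a b))
    (hderiv : ∀ t ∈ Ioo a b, HasDerivAt x (φ t) t) :
    ∀ s ∈ Ioo a b, ∀ t ∈ Ioo a b, x t = x s + ∫ u in s..t, φ u := by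
  intro s hs t ht
  have hsub : uIcc s t ⊆ Ioo a b := ordConnected_Ioo.uIcc_subset hs ht
  rw [intervalIntegral.integral_eq_sub_of_hasDerivAt (fun u hu => hderiv u (hsub hu))
    ((hφ.mono hsub).intervalIntegrable), add_sub_cancel]

end AbsolutelyContinuousCurve

lemma hasDerivAt_sdVF_of_inclusion {n m : ℕ} {A : Matrix (Fin m) (Fin n) ℝ} {b : Fin m → ℝ}
    {C : Set (E n)} (hC : IsOpen C) {h : E n → ℝ} {Hess : E n → Matrix (Fin n) (Fin n) ℝ}
    (hHess : ∀ p ∈ C, HasFDerivAt (gradient h) (matCLM (Hess p)) p)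
    (hHcont : ContinuousOn Hess C) (hH : ∀ p ∈ C, IsUnit (Hess p).det)
    (hB : ∀ p ∈ C, IsUnit (A * (Hess p)⁻¹ * Aᵀ).det) (g : E n → E n)
    {x : ℝ → E n} {t : ℝ} (hxC : x t ∈ C) (hx : ContinuousAt x t)
    (hAx : ∀ᶠ s in 𝓝 t, A *ᵥ x s = b) {w : E n}
    (hw : HasDerivAt (fun s => gradient h (x s)) w t) {y : Fin m → ℝ}
    (hy : w + g (x t) = Aᵀ *ᵥ y) :
    HasDerivAt x (sdVF A Hess g (x t)) t := by
  set H := Hess (x t)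
  have hstrict : HasStrictFDerivAt (gradient h) (matCLE H (hH _ hxC) : E n →L[ℝ] E n) (x t) :=
    hasStrictFDerivAt_of_hasFDerivAt_of_continuousAt
      (eventually_of_mem (hC.mem_nhds hxC) hHess)
      ((continuousOn_matCLM_comp_iff.2 hHcont).continuousAt (hC.mem_nhds hxC))
  have hx' : HasDerivAt x (matVec H⁻¹ w) t := hstrict.hasDerivAt_of_comp hx hw
  have hAx' : A *ᵥ (H⁻¹ *ᵥ w) = 0 :=
    hx'.map_eq_zero_of_eventually_eq
      (LinearMap.toContinuousLinearMap (A.mulVecLin ∘ₗ (WithLp.linearEquiv 2 ℝ _).toLinearMap))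
      hAx
  have hHx' : H *ᵥ (H⁻¹ *ᵥ w) + g (x t) = Aᵀ *ᵥ y := by
    rwa [mulVec_mulVec, mul_nonsing_inv _ (hH _ hxC), one_mulVec]
  have hsd : matVec H⁻¹ w = sdVF A Hess g (x t) := by
    rw [sdVF_apply, matVec, matVec,
      eq_neg_sdMatrix_mulVec_of_mulVec_add_eq A H _ (hH _ hxC) (hB _ hxC) hHx' hAx', WithLp.toLp_neg]
  exact hsd ▸ hx'

theorem stmt2_general
    -- problem data: a full rank `m×n` matrix `A` (`m < n`), `b ∈ ℝᵐ`
    {n m : ℕ}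
    (A : Matrix (Fin m) (Fin n) ℝ) (b : Fin m → ℝ) (hrank : A.rank = m)
    -- `C` is a nonempty open convex set, `F = C ∩ {x | Ax = b}` is nonempty
    (C : Set (E n)) (hCopen : IsOpen C)
    (h : E n → ℝ) (Hess : E n → Matrix (Fin n) (Fin n) ℝ)
    -- `(H₀)`: `h` is of Legendre type with `int dom h = C`: it is strictly convex on `C`,
    -- `C²` on `C`, and its gradient blows up at the boundary of `C`;
    -- its Hessian `Hess` is positive definite and locally Lipschitz on `C`
    (hHess : ∀ x ∈ C, HasFDerivAt (gradient h) (matCLM (Hess x)) x)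
    (hHpos : ∀ x ∈ C, (Hess x).PosDef)
    (hHlip : ∀ x ∈ C, ∃ ε > 0, ∃ K : ℝ, ∀ y ∈ C ∩ Metric.ball x ε, ∀ z ∈ C ∩ Metric.ball x ε,
      ‖matCLM (Hess y) - matCLM (Hess z)‖ ≤ K * ‖y - z‖)
    -- `f` is `C¹` with locally Lipschitz gradient
    (f : E n → ℝ) (hf : ContDiff ℝ 1 f)
    -- the time interval and the curve
    (Tm TM : ℝ) (x : ℝ → E n)
    (hmem : ∀ t ∈ Ioo Tm TM, x t ∈ C ∩ {z | A.mulVec z = b}) :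
    -- `x` is locally absolutely continuous (i.e. `x ∈ W^{1,1}_loc`) and satisfies the
    -- differential inclusion almost everywhere ...
    ((∃ v : ℝ → E n, LocallyIntegrableOn v (Ioo Tm TM) ∧
        ∀ s ∈ Ioo Tm TM, ∀ t ∈ Ioo Tm TM, x t = x s + ∫ u in s..t, v u) ∧
      (∀ᵐ t, t ∈ Ioo Tm TM →
        ∃ w : E n, HasDerivAt (fun s => gradient h (x s)) w t ∧
          ∃ y : Fin m → ℝ, w + gradient f (x t) = Aᵀ.mulVec y))
    ↔
    -- ... if and only if `x` is the `C¹` solution of `(H-SD)`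
    (∀ t ∈ Ioo Tm TM, HasDerivAt x (sdVF A Hess (gradient f) (x t)) t) := by
  have hxC (t : ℝ) (ht : t ∈ Ioo Tm TM) : x t ∈ C := (hmem t ht).1
  have hH (p : E n) (hp : p ∈ C) : IsUnit (Hess p).det :=
    (Hess p).isUnit_iff_isUnit_det.mp (hHpos p hp).isUnit
  have hB (p : E n) (hp : p ∈ C) : IsUnit (A * (Hess p)⁻¹ * Aᵀ).det :=
    (isUnit_iff_isUnit_det _).mp
      ((hHpos p hp).mul_inv_mul_transpose_of_rank_eq (by rwa [Fintype.card_fin])).isUnit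
  have hHcont : ContinuousOn Hess C :=
    continuousOn_matCLM_comp_iff.1 (locallyLipschitzOn_of_norm_sub_le hHlip).continuousOn
  have hsd : ContinuousOn x (Ioo Tm TM) →
      ContinuousOn (fun t => sdVF A Hess (gradient f) (x t)) (Ioo Tm TM) := fun hx =>
    (continuousOn_sdVF A hHcont hf.continuous_gradient.continuousOn hH hB).comp hx hxC
  constructor
  · rintro ⟨⟨v, hv, hxv⟩, hincl⟩
    have hx := continuousOn_of_eq_add_integral hv hxv
    refine hasDerivAt_of_eq_add_integral_of_ae hv hxv (hsd hx) ?_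
    filter_upwards [hincl] with t ht htI
    obtain ⟨w, hw, y, hy⟩ := ht htI
    have hnhds : Ioo Tm TM ∈ 𝓝 t := Ioo_mem_nhds htI.1 htI.2
    exact hasDerivAt_sdVF_of_inclusion hCopen hHess hHcont hH hB _ (hxC t htI)
      (hx.continuousAt hnhds) (eventually_of_mem hnhds fun s hs => (hmem s hs).2) hw hy
  · intro hode
    have hsdx := hsd fun t ht => (hode t ht).continuousAt.continuousWithinAt
    refine ⟨⟨_, hsdx.locallyIntegrableOn measurableSet_Ioo,
      eq_add_integral_of_hasDerivAt hsdx hode⟩, Eventually.of_forall fun t ht => ?_⟩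
    exact ⟨_, (hHess _ (hxC t ht)).comp_hasDerivAt t (hode t ht), _,
      mulVec_neg_sdMatrix_mulVec_add_eq A _ _ (hH _ (hxC t ht))⟩

/-- A locally absolutely continuous curve `x` with values in
`F = C ∩ {Ax = b}` satisfies the differential inclusion
`(d/dt)∇h(x(t)) + ∇f(x(t)) ∈ Im Aᵀ` a.e. if and only if it is the `C¹` solution of the
steepest descent equation
`ẋ = −∇²h(x)⁻¹[I − Aᵀ(A∇²h(x)⁻¹Aᵀ)⁻¹A∇²h(x)⁻¹]∇f(x)`. -/
theorem stmt2
    -- problem data: a full rank `m×n` matrix `A` (`m < n`), `b ∈ ℝᵐ`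
    {n m : ℕ} (hm : 0 < m) (hmn : m < n)
    (A : Matrix (Fin m) (Fin n) ℝ) (b : Fin m → ℝ) (hrank : A.rank = m)
    -- `C` is a nonempty open convex set, `F = C ∩ {x | Ax = b}` is nonempty
    (C : Set (E n)) (hCopen : IsOpen C) (hCconv : Convex ℝ C) (hCne : C.Nonempty)
    (hFne : (C ∩ {x | A.mulVec x = b}).Nonempty)
    (h : E n → ℝ) (Hess : E n → Matrix (Fin n) (Fin n) ℝ)
    -- `(H₀)`: `h` is of Legendre type with `int dom h = C`: it is strictly convex on `C`,
    -- `C²` on `C`, and its gradient blows up at the boundary of `C`;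
    -- its Hessian `Hess` is positive definite and locally Lipschitz on `C`
    (hhC2 : ContDiffOn ℝ 2 h C) (hhconv : ConvexOn ℝ C h) (hhstrict : StrictConvexOn ℝ C h)
    (hLeg : ∀ (z : ℕ → E n) (x' : E n), (∀ j, z j ∈ C) → x' ∈ frontier C →
      Tendsto z atTop (𝓝 x') → Tendsto (fun j => ‖gradient h (z j)‖) atTop atTop)
    (hHess : ∀ x ∈ C, HasFDerivAt (gradient h) (matCLM (Hess x)) x)
    (hHpos : ∀ x ∈ C, (Hess x).PosDef)
    (hHlip : ∀ x ∈ C, ∃ ε > 0, ∃ K : ℝ, ∀ y ∈ C ∩ Metric.ball x ε, ∀ z ∈ C ∩ Metric.ball x ε,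
      ‖matCLM (Hess y) - matCLM (Hess z)‖ ≤ K * ‖y - z‖)
    -- `f` is `C¹` with locally Lipschitz gradient
    (f : E n → ℝ) (hf : ContDiff ℝ 1 f)
    (hfgrad : ∀ x : E n, ∃ ε > 0, ∃ K : ℝ, ∀ y ∈ Metric.ball x ε, ∀ z ∈ Metric.ball x ε,
      ‖gradient f y - gradient f z‖ ≤ K * ‖y - z‖)
    -- the time interval and the curve
    (Tm TM : ℝ) (hT : Tm < TM) (x : ℝ → E n)
    (hmem : ∀ t ∈ Ioo Tm TM, x t ∈ C ∩ {z | A.mulVec z = b}) :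
    -- `x` is locally absolutely continuous (i.e. `x ∈ W^{1,1}_loc`) and satisfies the
    -- differential inclusion almost everywhere ...
    ((∃ v : ℝ → E n, LocallyIntegrableOn v (Ioo Tm TM) ∧
        ∀ s ∈ Ioo Tm TM, ∀ t ∈ Ioo Tm TM, x t = x s + ∫ u in s..t, v u) ∧
      (∀ᵐ t, t ∈ Ioo Tm TM →
        ∃ w : E n, HasDerivAt (fun s => gradient h (x s)) w t ∧
          ∃ y : Fin m → ℝ, w + gradient f (x t) = Aᵀ.mulVec y))
    ↔
    -- ... if and only if `x` is the `C¹` solution of `(H-SD)`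
    (∀ t ∈ Ioo Tm TM, HasDerivAt x (sdVF A Hess (gradient f) (x t)) t) :=
  stmt2_general A b hrank C hCopen h Hess hHess hHpos hHlip f hf Tm TM x hmem
end
end

section
/- Suppose f(x) = ⟨c, x⟩ is linear and let x : [0, T) → F be a C¹ solution of the steepest descent equation ẋ(t) = −∇²h(x(t))⁻¹[I − Aᵀ(A∇²h(x(t))⁻¹Aᵀ)⁻¹A∇²h(x(t))⁻¹]c with x(0) = x⁰ ∈ F. Then for every t ∈ (0, T), x(t) minimizes the function z ↦ ⟨c, z⟩ + (1/t) D_h(z, x⁰) over the set {z ∈ dom h : Az = b}; that is, ⟨c, x(t)⟩ + (1/t) D_h(x(t), x⁰) ≤ ⟨c, z⟩ + (1/t) D_h(z, x⁰) for all z ∈ dom h with Az = b. -/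
noncomputable section
open Set Filter Topology Matrix MeasureTheory

/-!
Put `v = z - x(t)`, so that `Av = 0`. Along the flow `d/ds ∇h(x(s)) = ∇²h(x(s)) ẋ(s) = -c + Aᵀλ(s)`,
and `Aᵀλ(s)` is orthogonal to `v`; hence `⟪∇h(x(t)) - ∇h(x⁰), v⟫ = -t⟪c, v⟫`. Therefore
`D_h(z, x⁰) - D_h(x(t), x⁰) = h(z) - h(x(t)) - ⟪∇h(x(t)), v⟫ - t⟪c, v⟫ ≥ -t⟪c, v⟫`
by the gradient inequality for the convex function `h`, and dividing by `t` gives the claim.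
-/

theorem ConvexOn.apply_sub_le_sub_of_hasFDerivAt {F : Type*} [NormedAddCommGroup F]
    [NormedSpace ℝ F] {s : Set F} {f : F → ℝ} {f' : F →L[ℝ] ℝ} (hf : ConvexOn ℝ s f) {a z : F}
    (ha : a ∈ s) (hz : z ∈ s) (hd : HasFDerivAt f f' a) : f' (z - a) ≤ f z - f a := by
  let ℓ : ℝ →ᵃ[ℝ] F := AffineMap.lineMap a z
  have hℓ0 : ℓ 0 = a := AffineMap.lineMap_apply_zero a z
  have hℓ1 : ℓ 1 = z := AffineMap.lineMap_apply_one a z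
  have hconv : ConvexOn ℝ (ℓ ⁻¹' s) (f ∘ ℓ) := hf.comp_affineMap ℓ
  have hderiv : HasDerivAt (f ∘ ℓ) (f' (z - a)) 0 := by
    rw [← hℓ0] at hd
    exact hd.comp_hasDerivAt 0 AffineMap.hasDerivAt_lineMap
  simpa [slope_def_field, hℓ0, hℓ1] using
    hconv.le_slope_of_hasDerivAt (by simpa [hℓ0] using ha) (by simpa [hℓ1] using hz)
      zero_lt_one hderiv

theorem ConvexOn.inner_gradient_sub_le_sub {F : Type*} [NormedAddCommGroup F]
    [InnerProductSpace ℝ F] [CompleteSpace F] {s : Set F} {f : F → ℝ}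
    (hf : ConvexOn ℝ s f) {a z : F} (ha : a ∈ s) (hz : z ∈ s) (hd : DifferentiableAt ℝ f a) :
    inner ℝ (gradient f a) (z - a) ≤ f z - f a :=
  hf.apply_sub_le_sub_of_hasFDerivAt ha hz hd.hasGradientAt.hasFDerivAt

theorem Dh_sub_Dh {n : ℕ} (h : E n → ℝ) (a a' y : E n) :
    Dh h a y - Dh h a' y = h a - h a' - inner ℝ (gradient h y) (a - a') := by
  simp only [Dh, ← sub_sub_sub_cancel_right a a' y, inner_sub_right]
  ring

section SteepestDescent

variable {n m : ℕ} (A : Matrix (Fin m) (Fin n) ℝ) (Hess : E n → Matrix (Fin n) (Fin n) ℝ)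

/-- Seen through the metric `Hess y`, the descent direction is `-g y` up to a term in the range
of `Aᵀ`, which is orthogonal to `ker A`. -/
theorem inner_matCLM_sdVF_of_mulVec_eq_zero (g : E n → E n) {y v : E n}
    (hy : IsUnit (Hess y).det) (hv : A *ᵥ v = 0) :
    inner ℝ (matCLM (Hess y) (sdVF A Hess g y)) v = -inner ℝ (g y) v := by
  set H := Hess y
  set K := (A * H⁻¹ * Aᵀ)⁻¹
  have hHH : H * (H⁻¹ * (1 - Aᵀ * K * A * H⁻¹)) = 1 - Aᵀ * (K * A * H⁻¹) := by
    rw [← Matrix.mul_assoc, Matrix.mul_nonsing_inv _ hy, Matrix.one_mul, Matrix.mul_assoc,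
      Matrix.mul_assoc, Matrix.mul_assoc]
  have hAT : (Aᵀ *ᵥ ((K * A * H⁻¹) *ᵥ g y)) ⬝ᵥ v = 0 := by
    rw [Matrix.mulVec_transpose, ← Matrix.dotProduct_mulVec, hv, dotProduct_zero]
  change (v.ofLp ⬝ᵥ (H *ᵥ -((H⁻¹ * (1 - Aᵀ * K * A * H⁻¹)) *ᵥ (g y).ofLp))) =
    -(v.ofLp ⬝ᵥ (g y).ofLp)
  rw [Matrix.mulVec_neg, Matrix.mulVec_mulVec, hHH, Matrix.sub_mulVec, Matrix.one_mulVec,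
    ← Matrix.mulVec_mulVec, dotProduct_neg, dotProduct_sub, dotProduct_comm v.ofLp (Aᵀ *ᵥ _), hAT]
  ring

theorem inner_sub_eq_of_hasDerivAt_sdVF {C : Set (E n)} {G : E n → E n} (c : E n)
    (hG : ∀ y ∈ C, HasFDerivAt G (matCLM (Hess y)) y) (hHess : ∀ y ∈ C, IsUnit (Hess y).det)
    {x : ℝ → E n} {t : ℝ} (ht : 0 ≤ t) (hxC : ∀ s ∈ Icc 0 t, x s ∈ C)
    (hode : ∀ s ∈ Icc 0 t, HasDerivAt x (sdVF A Hess (fun _ => c) (x s)) s)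
    {v : E n} (hv : A *ᵥ v = 0) :
    inner ℝ (G (x t) - G (x 0)) v = -(t * inner ℝ c v) := by
  set q : ℝ → ℝ := fun s => inner ℝ (G (x s)) v + s * inner ℝ c v
  have hq : ∀ s ∈ Icc 0 t, HasDerivAt q 0 s := by
    intro s hs
    have hGx := ((hG _ (hxC s hs)).comp_hasDerivAt s (hode s hs)).inner ℝ (hasDerivAt_const s v)
    have hlin : HasDerivAt (fun s : ℝ => s * inner ℝ c v) (inner ℝ c v) s :=
      hasDerivAt_mul_const _
    refine (hGx.add hlin).congr_deriv ?_
    rw [inner_zero_right, zero_add,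
      inner_matCLM_sdVF_of_mulVec_eq_zero A Hess _ (hHess _ (hxC s hs)) hv, neg_add_cancel]
  have hconst := constant_of_has_deriv_right_zero
    (fun s hs => (hq s hs).continuousAt.continuousWithinAt)
    (fun s hs => (hq s (Ico_subset_Icc_self hs)).hasDerivWithinAt) t (right_mem_Icc.2 ht)
  simp only [q, zero_mul, add_zero] at hconst
  rw [inner_sub_left]
  linarith

end SteepestDescent

theorem stmt3_general
    -- problem data: a full rank `m×n` matrix `A` (`m < n`), `b ∈ ℝᵐ`
    {n m : ℕ}
    (A : Matrix (Fin m) (Fin n) ℝ) (b : Fin m → ℝ)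
    -- `C` is a nonempty open convex set, `F = C ∩ {x | Ax = b}` is nonempty
    (C : Set (E n)) (hCopen : IsOpen C)
    (h : E n → ℝ) (Hess : E n → Matrix (Fin n) (Fin n) ℝ)
    -- `(H₀)`: `h` is of Legendre type with `int dom h = C`: it is strictly convex on `C`,
    -- `C²` on `C`, and its gradient blows up at the boundary of `C`;
    -- its Hessian `Hess` is positive definite and locally Lipschitz on `C`
    (hhC2 : ContDiffOn ℝ 2 h C)
    (hHess : ∀ x ∈ C, HasFDerivAt (gradient h) (matCLM (Hess x)) x)
    (hHpos : ∀ x ∈ C, (Hess x).PosDef)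
    -- here `dom h = cl C`: `h` is convex (hence finite) on `cl C`
    (hhconvcl : ConvexOn ℝ (closure C) h)
    -- linear objective function
    (c : E n)
    -- the trajectory: a `C¹` solution of `(H-SD)` on `[0,T)` with values in `F`
    (T : ℝ) (x : ℝ → E n) (x0 : E n)
    (hx0 : x 0 = x0)
    (hmem : ∀ t ∈ Ico 0 T, x t ∈ C ∩ {z | A.mulVec z = b})
    (hode : ∀ t ∈ Ico 0 T, HasDerivAt x (sdVF A Hess (fun _ => c) (x t)) t) :
    ∀ t ∈ Ioo 0 T, ∀ z ∈ closure C, A.mulVec z = b →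
      (inner ℝ c (x t) : ℝ) + (1 / t) * Dh h (x t) x0 ≤
        (inner ℝ c z : ℝ) + (1 / t) * Dh h z x0 := by
  intro t ht z hzC hAz
  have hIcc : Icc 0 t ⊆ Ico 0 T := Icc_subset_Ico_right ht.2
  have hxt := hmem t (hIcc (right_mem_Icc.2 ht.1.le))
  have hAv : A *ᵥ (z - x t).ofLp = 0 := by
    rw [WithLp.ofLp_sub, Matrix.mulVec_sub, hAz, hxt.2, sub_self]
  have hflow := inner_sub_eq_of_hasDerivAt_sdVF A Hess c hHess
    (fun y hy => (Matrix.isUnit_iff_isUnit_det _).1 (hHpos y hy).isUnit) ht.1.le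
    (fun s hs => (hmem s (hIcc hs)).1) (fun s hs => hode s (hIcc hs)) hAv
  have hsupport := hhconvcl.inner_gradient_sub_le_sub (subset_closure hxt.1) hzC
    ((hhC2.contDiffAt (hCopen.mem_nhds hxt.1)).differentiableAt (by norm_num))
  have hD : -(t * (inner ℝ c z - inner ℝ c (x t))) ≤ Dh h z x0 - Dh h (x t) x0 := by
    rw [Dh_sub_Dh, ← hx0, ← inner_sub_right]
    rw [inner_sub_left] at hflow
    linarith
  have hgap : (inner ℝ c z + 1 / t * Dh h z x0) - (inner ℝ c (x t) + 1 / t * Dh h (x t) x0) =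
      (t * (inner ℝ c z - inner ℝ c (x t)) + (Dh h z x0 - Dh h (x t) x0)) / t := by
    field_simp [ht.1.ne']
    ring
  exact sub_nonneg.1 (hgap ▸ div_nonneg (by linarith) ht.1.le)

/-- For a linear objective `f(x) = ⟨c,x⟩`, the steepest descent
trajectory is a viscosity path: for every `t ∈ (0,T)`, `x(t)` minimizes
`z ↦ ⟨c,z⟩ + D_h(z,x⁰)/t` over `{z ∈ dom h : Az = b}` (here `dom h = cl C`). -/
theorem stmt3
    -- problem data: a full rank `m×n` matrix `A` (`m < n`), `b ∈ ℝᵐ`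
    {n m : ℕ} (hm : 0 < m) (hmn : m < n)
    (A : Matrix (Fin m) (Fin n) ℝ) (b : Fin m → ℝ) (hrank : A.rank = m)
    -- `C` is a nonempty open convex set, `F = C ∩ {x | Ax = b}` is nonempty
    (C : Set (E n)) (hCopen : IsOpen C) (hCconv : Convex ℝ C) (hCne : C.Nonempty)
    (hFne : (C ∩ {x | A.mulVec x = b}).Nonempty)
    (h : E n → ℝ) (Hess : E n → Matrix (Fin n) (Fin n) ℝ)
    -- `(H₀)`: `h` is of Legendre type with `int dom h = C`: it is strictly convex on `C`,
    -- `C²` on `C`, and its gradient blows up at the boundary of `C`;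
    -- its Hessian `Hess` is positive definite and locally Lipschitz on `C`
    (hhC2 : ContDiffOn ℝ 2 h C) (hhconv : ConvexOn ℝ C h) (hhstrict : StrictConvexOn ℝ C h)
    (hLeg : ∀ (z : ℕ → E n) (x' : E n), (∀ j, z j ∈ C) → x' ∈ frontier C →
      Tendsto z atTop (𝓝 x') → Tendsto (fun j => ‖gradient h (z j)‖) atTop atTop)
    (hHess : ∀ x ∈ C, HasFDerivAt (gradient h) (matCLM (Hess x)) x)
    (hHpos : ∀ x ∈ C, (Hess x).PosDef)
    (hHlip : ∀ x ∈ C, ∃ ε > 0, ∃ K : ℝ, ∀ y ∈ C ∩ Metric.ball x ε, ∀ z ∈ C ∩ Metric.ball x ε,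
      ‖matCLM (Hess y) - matCLM (Hess z)‖ ≤ K * ‖y - z‖)
    -- here `dom h = cl C`: `h` is convex (hence finite) on `cl C`
    (hhconvcl : ConvexOn ℝ (closure C) h) (hhcontcl : ContinuousOn h (closure C))
    -- linear objective function
    (c : E n)
    -- the trajectory: a `C¹` solution of `(H-SD)` on `[0,T)` with values in `F`
    (T : ℝ) (hT : 0 < T) (x : ℝ → E n) (x0 : E n)
    (hx0 : x 0 = x0) (hx0F : x0 ∈ C ∩ {z | A.mulVec z = b})
    (hmem : ∀ t ∈ Ico 0 T, x t ∈ C ∩ {z | A.mulVec z = b})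
    (hode : ∀ t ∈ Ico 0 T, HasDerivAt x (sdVF A Hess (fun _ => c) (x t)) t) :
    ∀ t ∈ Ioo 0 T, ∀ z ∈ closure C, A.mulVec z = b →
      (inner ℝ c (x t) : ℝ) + (1 / t) * Dh h (x t) x0 ≤
        (inner ℝ c z : ℝ) + (1 / t) * Dh h z x0 :=
  stmt3_general A b C hCopen h Hess hhC2 hHess hHpos hhconvcl c T x x0 hx0 hmem hode
end
end

section
/- Let x : [0, T) → F be a C¹ solution of the steepest descent equation ẋ(t) = −∇²h(x(t))⁻¹[I − Aᵀ(A∇²h(x(t))⁻¹Aᵀ)⁻¹A∇²h(x(t))⁻¹]∇f(x(t)). Then for every t ∈ [0, T), (d/dt) f(x(t)) = −⟨∇²h(x(t)) ẋ(t), ẋ(t)⟩ ≤ 0; in particular t ↦ f(x(t)) is nonincreasing on [0, T). -/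
/-!
The velocity is `ẋ = -Q ∇f(x)` with `Q = H⁻¹ - H⁻¹Aᵀ(AH⁻¹Aᵀ)⁻¹AH⁻¹` and `H = ∇²h(x)`. Since `H` is
symmetric, `Qᵀ H Q = Q`, so the chain rule gives `(d/dt) f(x) = ⟨∇f(x), ẋ⟩ = -⟨∇f(x), Q∇f(x)⟩
= -⟨Hẋ, ẋ⟩`, which is nonpositive because `H` is positive definite; monotonicity then follows
from the mean value theorem.
-/

noncomputable section
open Set Filter Topology Matrix MeasureTheory

/-- For symmetric positive definite `H` and surjective `A`, `invOnKer A H *ᵥ g` minimises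
`v ↦ ½ vᵀ H v - gᵀ v` over `ker A`. -/
def Matrix.invOnKer {ι κ K : Type*} [Fintype ι] [DecidableEq ι] [Fintype κ] [DecidableEq κ]
    [Field K] (A : Matrix κ ι K) (H : Matrix ι ι K) : Matrix ι ι K :=
  H⁻¹ * (1 - Aᵀ * (A * H⁻¹ * Aᵀ)⁻¹ * A * H⁻¹)

namespace Matrix

variable {ι κ K : Type*} [Fintype ι] [DecidableEq ι] [Fintype κ] [DecidableEq κ] [Field K]

lemma nonsing_inv_mul_mul_nonsing_inv (M : Matrix κ κ K) : M⁻¹ * M * M⁻¹ = M⁻¹ := by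
  by_cases hM : IsUnit M.det
  · rw [nonsing_inv_mul _ hM, one_mul]
  · simp [nonsing_inv_apply_not_isUnit _ hM]

lemma transpose_invOnKer_mul_mul_invOnKer (A : Matrix κ ι K) {H : Matrix ι ι K}
    (hH : H.IsSymm) (hdet : IsUnit H.det) :
    (invOnKer A H)ᵀ * H * invOnKer A H = invOnKer A H := by
  set G := H⁻¹
  have hG : Gᵀ = G := hH.inv
  set M := A * G * Aᵀ
  have hM : Mᵀ = M := by simp only [M, transpose_mul, transpose_transpose, hG, Matrix.mul_assoc]
  set B := Aᵀ * M⁻¹ * A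
  have hB : Bᵀ = B := by
    simp only [B, transpose_mul, transpose_transpose, transpose_nonsing_inv, hM, Matrix.mul_assoc]
  have hBGB : B * G * B = B := by
    calc B * G * B = Aᵀ * (M⁻¹ * M * M⁻¹) * A := by simp only [B, M, Matrix.mul_assoc]
      _ = B := by rw [nonsing_inv_mul_mul_nonsing_inv]
  have hGH : G * H = 1 := nonsing_inv_mul H hdet
  have hQ : invOnKer A H = G * (1 - B * G) := by simp only [invOnKer, B, M, G, Matrix.mul_assoc]
  have hQT : (G * (1 - B * G))ᵀ = (1 - G * B) * G := by
    rw [transpose_mul, transpose_sub, transpose_one, transpose_mul, hG, hB]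
  calc (invOnKer A H)ᵀ * H * invOnKer A H
      = (1 - G * B) * (G * H) * G * (1 - B * G) := by rw [hQ, hQT]; noncomm_ring
    _ = G - G * B * G - (G * B * G - G * (B * G * B) * G) := by rw [hGH]; noncomm_ring
    _ = invOnKer A H := by rw [hBGB, hQ]; noncomm_ring

lemma mulVec_invOnKer_dotProduct_invOnKer (A : Matrix κ ι K) {H : Matrix ι ι K}
    (hH : H.IsSymm) (hdet : IsUnit H.det) (g : ι → K) :
    H *ᵥ (invOnKer A H *ᵥ g) ⬝ᵥ invOnKer A H *ᵥ g = g ⬝ᵥ invOnKer A H *ᵥ g := by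
  conv_rhs => rw [← transpose_invOnKer_mul_mul_invOnKer A hH hdet]
  rw [← mulVec_mulVec, ← mulVec_mulVec, dotProduct_mulVec g, vecMul_transpose, dotProduct_comm]

end Matrix

lemma inner_eq_dotProduct {ι : Type*} [Fintype ι] (u v : EuclideanSpace ℝ ι) :
    inner ℝ u v = u.ofLp ⬝ᵥ v.ofLp := by
  rw [EuclideanSpace.inner_eq_star_dotProduct, star_trivial, dotProduct_comm]

lemma inner_matVec_self_nonneg {n : ℕ} {M : Matrix (Fin n) (Fin n) ℝ} (hM : M.PosSemidef)
    (v : E n) : 0 ≤ inner ℝ (matVec M v) v := by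
  rw [inner_eq_dotProduct, dotProduct_comm]
  exact hM.dotProduct_mulVec_nonneg v.ofLp

lemma sdVF_eq_neg_matVec_invOnKer {n m : ℕ} (A : Matrix (Fin m) (Fin n) ℝ)
    (Hess : E n → Matrix (Fin n) (Fin n) ℝ) (g : E n → E n) (p : E n) :
    sdVF A Hess g p = -matVec (A.invOnKer (Hess p)) (g p) :=
  rfl

lemma inner_sdVF_eq_neg_inner_matVec {n m : ℕ} (A : Matrix (Fin m) (Fin n) ℝ)
    {Hess : E n → Matrix (Fin n) (Fin n) ℝ} (g : E n → E n) {p : E n}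
    (hH : (Hess p).IsSymm) (hdet : IsUnit (Hess p).det) :
    inner ℝ (g p) (sdVF A Hess g p) =
      -inner ℝ (matVec (Hess p) (sdVF A Hess g p)) (sdVF A Hess g p) := by
  simp only [sdVF_eq_neg_matVec_invOnKer, matVec, inner_eq_dotProduct, WithLp.ofLp_neg,
    mulVec_neg, neg_dotProduct, dotProduct_neg, neg_neg,
    Matrix.mulVec_invOnKer_dotProduct_invOnKer A hH hdet]

lemma HasGradientAt.comp_hasDerivAt {F : Type*} [NormedAddCommGroup F] [InnerProductSpace ℝ F]
    [CompleteSpace F] {f : F → ℝ} {f' : F} {x : ℝ → F} {x' : F} {t : ℝ}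
    (hf : HasGradientAt f f' (x t)) (hx : HasDerivAt x x' t) :
    HasDerivAt (fun s => f (x s)) (inner ℝ f' x') t := by
  have := hf.hasFDerivAt.comp_hasDerivAt t hx
  rwa [InnerProductSpace.toDual_apply_apply] at this

lemma antitoneOn_of_hasDerivAt_nonpos {D : Set ℝ} (hD : Convex ℝ D) {f f' : ℝ → ℝ}
    (hf : ∀ t ∈ D, HasDerivAt f (f' t) t) (hf' : ∀ t ∈ D, f' t ≤ 0) : AntitoneOn f D :=
  antitoneOn_of_hasDerivWithinAt_nonpos hD (fun t ht => (hf t ht).continuousAt.continuousWithinAt)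
    (fun t ht => (hf t (interior_subset ht)).hasDerivWithinAt)
    (fun t ht => hf' t (interior_subset ht))

theorem stmt4_general
    -- problem data: a full rank `m×n` matrix `A` (`m < n`), `b ∈ ℝᵐ`
    {n m : ℕ}
    (A : Matrix (Fin m) (Fin n) ℝ) (b : Fin m → ℝ)
    (C : Set (E n))
    (Hess : E n → Matrix (Fin n) (Fin n) ℝ)
    -- `(H₀)`: `h` is of Legendre type with `int dom h = C`: it is strictly convex on `C`,
    -- `C²` on `C`, and its gradient blows up at the boundary of `C`;
    -- its Hessian `Hess` is positive definite and locally Lipschitz on `C`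
    (hHpos : ∀ x ∈ C, (Hess x).PosDef)
    -- `f` is `C¹` with locally Lipschitz gradient
    (f : E n → ℝ) (hf : ContDiff ℝ 1 f)
    -- the trajectory: a `C¹` solution of `(H-SD)` on `[0,T)` with values in `F`
    (T : ℝ) (x : ℝ → E n)
    (hmem : ∀ t ∈ Ico 0 T, x t ∈ C ∩ {z | A.mulVec z = b})
    (hode : ∀ t ∈ Ico 0 T, HasDerivAt x (sdVF A Hess (gradient f) (x t)) t) :
    (∀ t ∈ Ico 0 T,
      HasDerivAt (fun s => f (x s))
        (-(inner ℝ (matVec (Hess (x t)) (sdVF A Hess (gradient f) (x t)))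
            (sdVF A Hess (gradient f) (x t)) : ℝ)) t ∧
      0 ≤ (inner ℝ (matVec (Hess (x t)) (sdVF A Hess (gradient f) (x t)))
            (sdVF A Hess (gradient f) (x t)) : ℝ)) ∧
    AntitoneOn (fun t => f (x t)) (Ico 0 T) := by
  have descent : ∀ t ∈ Ico 0 T,
      HasDerivAt (fun s => f (x s))
        (-(inner ℝ (matVec (Hess (x t)) (sdVF A Hess (gradient f) (x t)))
            (sdVF A Hess (gradient f) (x t)) : ℝ)) t ∧
      0 ≤ (inner ℝ (matVec (Hess (x t)) (sdVF A Hess (gradient f) (x t)))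
            (sdVF A Hess (gradient f) (x t)) : ℝ) := by
    intro t ht
    have hH := hHpos (x t) (hmem t ht).1
    have hchain := ((hf.differentiable one_ne_zero (x t)).hasGradientAt).comp_hasDerivAt
      (hode t ht)
    rw [inner_sdVF_eq_neg_inner_matVec A _ (isHermitian_iff_isSymm.mp hH.isHermitian)
      ((isUnit_iff_isUnit_det _).mp hH.isUnit)] at hchain
    exact ⟨hchain, inner_matVec_self_nonneg hH.posSemidef _⟩
  exact ⟨descent, antitoneOn_of_hasDerivAt_nonpos (convex_Ico 0 T) (fun t ht => (descent t ht).1)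
    (fun t ht => neg_nonpos.mpr (descent t ht).2)⟩

/-- Along any `C¹` solution of the steepest descent equation,
`(d/dt) f(x(t)) = −⟨∇²h(x(t)) ẋ(t), ẋ(t)⟩ ≤ 0`; in particular `t ↦ f(x(t))`
is nonincreasing on `[0,T)`. -/
theorem stmt4
    -- problem data: a full rank `m×n` matrix `A` (`m < n`), `b ∈ ℝᵐ`
    {n m : ℕ} (hm : 0 < m) (hmn : m < n)
    (A : Matrix (Fin m) (Fin n) ℝ) (b : Fin m → ℝ) (hrank : A.rank = m)
    -- `C` is a nonempty open convex set, `F = C ∩ {x | Ax = b}` is nonempty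
    (C : Set (E n)) (hCopen : IsOpen C) (hCconv : Convex ℝ C) (hCne : C.Nonempty)
    (hFne : (C ∩ {x | A.mulVec x = b}).Nonempty)
    (h : E n → ℝ) (Hess : E n → Matrix (Fin n) (Fin n) ℝ)
    -- `(H₀)`: `h` is of Legendre type with `int dom h = C`: it is strictly convex on `C`,
    -- `C²` on `C`, and its gradient blows up at the boundary of `C`;
    -- its Hessian `Hess` is positive definite and locally Lipschitz on `C`
    (hhC2 : ContDiffOn ℝ 2 h C) (hhconv : ConvexOn ℝ C h) (hhstrict : StrictConvexOn ℝ C h)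
    (hLeg : ∀ (z : ℕ → E n) (x' : E n), (∀ j, z j ∈ C) → x' ∈ frontier C →
      Tendsto z atTop (𝓝 x') → Tendsto (fun j => ‖gradient h (z j)‖) atTop atTop)
    (hHess : ∀ x ∈ C, HasFDerivAt (gradient h) (matCLM (Hess x)) x)
    (hHpos : ∀ x ∈ C, (Hess x).PosDef)
    (hHlip : ∀ x ∈ C, ∃ ε > 0, ∃ K : ℝ, ∀ y ∈ C ∩ Metric.ball x ε, ∀ z ∈ C ∩ Metric.ball x ε,
      ‖matCLM (Hess y) - matCLM (Hess z)‖ ≤ K * ‖y - z‖)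
    -- `f` is `C¹` with locally Lipschitz gradient
    (f : E n → ℝ) (hf : ContDiff ℝ 1 f)
    (hfgrad : ∀ x : E n, ∃ ε > 0, ∃ K : ℝ, ∀ y ∈ Metric.ball x ε, ∀ z ∈ Metric.ball x ε,
      ‖gradient f y - gradient f z‖ ≤ K * ‖y - z‖)
    -- the trajectory: a `C¹` solution of `(H-SD)` on `[0,T)` with values in `F`
    (T : ℝ) (hT : 0 < T) (x : ℝ → E n)
    (hmem : ∀ t ∈ Ico 0 T, x t ∈ C ∩ {z | A.mulVec z = b})
    (hode : ∀ t ∈ Ico 0 T, HasDerivAt x (sdVF A Hess (gradient f) (x t)) t) :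
    (∀ t ∈ Ico 0 T,
      HasDerivAt (fun s => f (x s))
        (-(inner ℝ (matVec (Hess (x t)) (sdVF A Hess (gradient f) (x t)))
            (sdVF A Hess (gradient f) (x t)) : ℝ)) t ∧
      0 ≤ (inner ℝ (matVec (Hess (x t)) (sdVF A Hess (gradient f) (x t)))
            (sdVF A Hess (gradient f) (x t)) : ℝ)) ∧
    AntitoneOn (fun t => f (x t)) (Ico 0 T) :=
  stmt4_general A b C Hess hHpos f hf T x hmem hode
end
end

section
/- Let x : [0, T) → F be a C¹ solution of the steepest descent equation ẋ(t) = −∇²h(x(t))⁻¹[I − Aᵀ(A∇²h(x(t))⁻¹Aᵀ)⁻¹A∇²h(x(t))⁻¹]∇f(x(t)). Then for every a ∈ ℝⁿ with Aa = b, and for every t ∈ [0, T), the function t ↦ D_h(a, x(t)) is differentiable with (d/dt) D_h(a, x(t)) + ⟨∇f(x(t)), x(t) − a⟩ = 0. -/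
noncomputable section
open Set Filter Topology Matrix MeasureTheory

/-! Differentiating the Bregman distance along the trajectory gives
`d/dt D_h(a, x) = -⟨∇²h(x) ẋ, a - x⟩`. By the form of the vector field,
`∇²h(x) ẋ = -∇f(x) + Aᵀw` for some `w`, and `Aᵀw` is orthogonal to `a - x ∈ ker A`
because both `a` and `x(t)` satisfy `Az = b`. -/

lemma inner_matVec_eq_zero_of_mulVec_eq_zero {n m : ℕ} {A : Matrix (Fin m) (Fin n) ℝ}
    (W : Matrix (Fin m) (Fin n) ℝ) (u : E n) {d : E n} (hd : A *ᵥ d = 0) :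
    inner ℝ (matVec (Aᵀ * W) u) d = 0 := by
  rw [EuclideanSpace.inner_eq_star_dotProduct]
  simp only [matVec, WithLp.ofLp_toLp, star_trivial, ← mulVec_mulVec, mulVec_transpose]
  rw [dotProduct_comm, ← dotProduct_mulVec, hd, dotProduct_zero]

lemma matVec_mul_sdVF {n m : ℕ} (A : Matrix (Fin m) (Fin n) ℝ)
    (Hess : E n → Matrix (Fin n) (Fin n) ℝ) (g : E n → E n) {y : E n}
    (hH : IsUnit (Hess y).det) :
    matVec (Hess y) (sdVF A Hess g y) =
      -g y + matVec (Aᵀ * ((A * (Hess y)⁻¹ * Aᵀ)⁻¹ * A * (Hess y)⁻¹)) (g y) := by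
  simp only [sdVF, matVec, WithLp.ofLp_neg, mulVec_neg, mulVec_mulVec,
    mul_nonsing_inv_cancel_left _ _ hH, sub_mulVec, one_mulVec, ← Matrix.mul_assoc]
  rw [neg_sub, WithLp.toLp_sub, WithLp.toLp_ofLp, sub_eq_neg_add]

lemma inner_matVec_sdVF_of_mulVec_eq_zero {n m : ℕ} (A : Matrix (Fin m) (Fin n) ℝ)
    (Hess : E n → Matrix (Fin n) (Fin n) ℝ) (g : E n → E n) {y d : E n}
    (hH : IsUnit (Hess y).det) (hd : A *ᵥ d = 0) :
    inner ℝ (matVec (Hess y) (sdVF A Hess g y)) d = -inner ℝ (g y) d := by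
  rw [matVec_mul_sdVF A Hess g hH, inner_add_left, inner_neg_left,
    inner_matVec_eq_zero_of_mulVec_eq_zero _ _ hd, add_zero]

lemma hasDerivAt_Dh_comp {n : ℕ} {h : E n → ℝ} {L : E n →L[ℝ] E n} {x : ℝ → E n} {v : E n}
    {t : ℝ} (a : E n) (hh : DifferentiableAt ℝ h (x t))
    (hL : HasFDerivAt (gradient h) L (x t)) (hx : HasDerivAt x v t) :
    HasDerivAt (fun s => Dh h a (x s)) (-inner ℝ (L v) (a - x t)) t := by
  refine (((hasDerivAt_const t (h a)).sub
    (hh.hasGradientAt.hasFDerivAt.comp_hasDerivAt t hx)).sub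
    ((hL.comp_hasDerivAt t hx).inner ℝ ((hasDerivAt_const t a).sub hx))).congr_deriv ?_
  simp only [Function.comp_apply, InnerProductSpace.toDual_apply_apply, Pi.sub_apply, zero_sub,
    inner_neg_right]
  ring

theorem stmt5_general
    -- problem data: a full rank `m×n` matrix `A` (`m < n`), `b ∈ ℝᵐ`
    {n m : ℕ}
    (A : Matrix (Fin m) (Fin n) ℝ) (b : Fin m → ℝ)
    -- `C` is a nonempty open convex set, `F = C ∩ {x | Ax = b}` is nonempty
    (C : Set (E n)) (hCopen : IsOpen C)
    (h : E n → ℝ) (Hess : E n → Matrix (Fin n) (Fin n) ℝ)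
    -- `(H₀)`: `h` is of Legendre type with `int dom h = C`: it is strictly convex on `C`,
    -- `C²` on `C`, and its gradient blows up at the boundary of `C`;
    -- its Hessian `Hess` is positive definite and locally Lipschitz on `C`
    (hhC2 : ContDiffOn ℝ 2 h C)
    (hHess : ∀ x ∈ C, HasFDerivAt (gradient h) (matCLM (Hess x)) x)
    (hHpos : ∀ x ∈ C, (Hess x).PosDef)
    (f : E n → ℝ)
    -- the trajectory: a `C¹` solution of `(H-SD)` on `[0,T)` with values in `F`
    (T : ℝ) (x : ℝ → E n)
    (hmem : ∀ t ∈ Ico 0 T, x t ∈ C ∩ {z | A.mulVec z = b})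
    (hode : ∀ t ∈ Ico 0 T, HasDerivAt x (sdVF A Hess (gradient f) (x t)) t) :
    ∀ (a : E n), A.mulVec a = b → ∀ t ∈ Ico 0 T,
      HasDerivAt (fun s => Dh h a (x s))
        (-(inner ℝ (gradient f (x t)) (x t - a) : ℝ)) t := by
  intro a ha t ht
  obtain ⟨hxC, hxA⟩ := hmem t ht
  have hh : DifferentiableAt ℝ h (x t) :=
    (hhC2.differentiableOn (by norm_num)).differentiableAt (hCopen.mem_nhds hxC)
  have hHinv : IsUnit (Hess (x t)).det := (hHpos _ hxC).det_pos.ne'.isUnit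
  have hker : A *ᵥ (a - x t).ofLp = 0 := by
    rw [WithLp.ofLp_sub, mulVec_sub, ha, hxA, sub_self]
  convert hasDerivAt_Dh_comp a hh (hHess _ hxC) (hode t ht) using 1
  rw [show matCLM (Hess (x t)) = matVec (Hess (x t)) from rfl,
    inner_matVec_sdVF_of_mulVec_eq_zero A Hess _ hHinv hker, neg_neg, ← inner_neg_right, neg_sub]

/-- Along any `C¹` solution of the steepest descent equation, for every
`a` with `Aa = b` the function `t ↦ D_h(a, x(t))` is differentiable with
`(d/dt) D_h(a,x(t)) + ⟨∇f(x(t)), x(t) − a⟩ = 0`. -/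
theorem stmt5
    -- problem data: a full rank `m×n` matrix `A` (`m < n`), `b ∈ ℝᵐ`
    {n m : ℕ} (hm : 0 < m) (hmn : m < n)
    (A : Matrix (Fin m) (Fin n) ℝ) (b : Fin m → ℝ) (hrank : A.rank = m)
    -- `C` is a nonempty open convex set, `F = C ∩ {x | Ax = b}` is nonempty
    (C : Set (E n)) (hCopen : IsOpen C) (hCconv : Convex ℝ C) (hCne : C.Nonempty)
    (hFne : (C ∩ {x | A.mulVec x = b}).Nonempty)
    (h : E n → ℝ) (Hess : E n → Matrix (Fin n) (Fin n) ℝ)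
    -- `(H₀)`: `h` is of Legendre type with `int dom h = C`: it is strictly convex on `C`,
    -- `C²` on `C`, and its gradient blows up at the boundary of `C`;
    -- its Hessian `Hess` is positive definite and locally Lipschitz on `C`
    (hhC2 : ContDiffOn ℝ 2 h C) (hhconv : ConvexOn ℝ C h) (hhstrict : StrictConvexOn ℝ C h)
    (hLeg : ∀ (z : ℕ → E n) (x' : E n), (∀ j, z j ∈ C) → x' ∈ frontier C →
      Tendsto z atTop (𝓝 x') → Tendsto (fun j => ‖gradient h (z j)‖) atTop atTop)
    (hHess : ∀ x ∈ C, HasFDerivAt (gradient h) (matCLM (Hess x)) x)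
    (hHpos : ∀ x ∈ C, (Hess x).PosDef)
    (hHlip : ∀ x ∈ C, ∃ ε > 0, ∃ K : ℝ, ∀ y ∈ C ∩ Metric.ball x ε, ∀ z ∈ C ∩ Metric.ball x ε,
      ‖matCLM (Hess y) - matCLM (Hess z)‖ ≤ K * ‖y - z‖)
    -- `f` is `C¹` with locally Lipschitz gradient
    (f : E n → ℝ) (hf : ContDiff ℝ 1 f)
    (hfgrad : ∀ x : E n, ∃ ε > 0, ∃ K : ℝ, ∀ y ∈ Metric.ball x ε, ∀ z ∈ Metric.ball x ε,
      ‖gradient f y - gradient f z‖ ≤ K * ‖y - z‖)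
    -- the trajectory: a `C¹` solution of `(H-SD)` on `[0,T)` with values in `F`
    (T : ℝ) (hT : 0 < T) (x : ℝ → E n)
    (hmem : ∀ t ∈ Ico 0 T, x t ∈ C ∩ {z | A.mulVec z = b})
    (hode : ∀ t ∈ Ico 0 T, HasDerivAt x (sdVF A Hess (gradient f) (x t)) t) :
    ∀ (a : E n), A.mulVec a = b → ∀ t ∈ Ico 0 T,
      HasDerivAt (fun s => Dh h a (x s))
        (-(inner ℝ (gradient f (x t)) (x t - a) : ℝ)) t :=
  stmt5_general A b C hCopen h Hess hhC2 hHess hHpos f T x hmem hode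
end
end

section
/- Let C ⊆ ℝⁿ be a nonempty open convex set and h be convex and differentiable on C. If (xʲ) ⊂ C is a sequence converging to a boundary point x* of C such that ‖∇h(xʲ)‖ → ∞ and ∇h(xʲ)/‖∇h(xʲ)‖ → ν for some ν ∈ ℝⁿ, then ν belongs to the normal cone N_{cl C}(x*), i.e. ⟨ν, y − x*⟩ ≤ 0 for all y ∈ cl C. -/
noncomputable section
open Set Filter Topology

/-! Every `y ∈ C` gives `⟪∇h(xʲ), y - xʲ⟫ ≤ h y - h xʲ`, and `h xʲ` is bounded below by the
tangent plane of `h` at a fixed point of `C`, which converges along `xʲ → x*`. So the left side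
is bounded above while `‖∇h(xʲ)‖ → ∞`; dividing by `‖∇h(xʲ)‖` gives `⟪ν, y - x*⟫ ≤ 0` in the
limit, and the half-space `{y | ⟪ν, y - x*⟫ ≤ 0}` is closed. -/

theorem ConvexOn.le_sub_of_hasFDerivAt {F : Type*} [NormedAddCommGroup F] [NormedSpace ℝ F]
    {C : Set F} {h : F → ℝ} {f' : F →L[ℝ] ℝ} {x y : F} (hconv : ConvexOn ℝ C h)
    (hx : x ∈ C) (hy : y ∈ C) (hf : HasFDerivAt h f' x) :
    f' (y - x) ≤ h y - h x := by
  let L := AffineMap.lineMap (k := ℝ) x y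
  have hL0 : L 0 = x := AffineMap.lineMap_apply_zero x y
  have hL1 : L 1 = y := AffineMap.lineMap_apply_one x y
  have hderiv : HasDerivAt (h ∘ L) (f' (y - x)) 0 :=
    (hL0 ▸ hf).comp_hasDerivAt 0 AffineMap.hasDerivAt_lineMap
  have hslope := (hconv.comp_affineMap L).le_slope_of_hasDerivAt
    (by simpa [hL0] using hx) (by simpa [hL1] using hy) zero_lt_one hderiv
  simpa [slope_def_field, hL0, hL1] using hslope

theorem ConvexOn.inner_sub_le_of_hasGradientAt {F : Type*} [NormedAddCommGroup F]
    [InnerProductSpace ℝ F] [CompleteSpace F] {C : Set F} {h : F → ℝ} {g x y : F}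
    (hconv : ConvexOn ℝ C h) (hx : x ∈ C) (hy : y ∈ C) (hg : HasGradientAt h g x) :
    inner ℝ g (y - x) ≤ h y - h x := by
  simpa using hconv.le_sub_of_hasFDerivAt hx hy hg.hasFDerivAt

theorem ConvexOn.inner_sub_nonpos_of_tendsto_normalized_gradient {F : Type*}
    [NormedAddCommGroup F] [InnerProductSpace ℝ F] [CompleteSpace F] {C : Set F} {h : F → ℝ}
    (hconv : ConvexOn ℝ C h) (hdiff : ∀ x ∈ C, DifferentiableAt ℝ h x)
    {x : ℕ → F} {x₀ ν y : F} (hxC : ∀ j, x j ∈ C) (hlim : Tendsto x atTop (𝓝 x₀))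
    (hblow : Tendsto (fun j => ‖gradient h (x j)‖) atTop atTop)
    (hdir : Tendsto (fun j => ‖gradient h (x j)‖⁻¹ • gradient h (x j)) atTop (𝓝 ν))
    (hy : y ∈ C) :
    inner ℝ ν (y - x₀) ≤ 0 := by
  have hgrad (z : F) (hz : z ∈ C) : HasGradientAt h (gradient h z) z :=
    (hdiff z hz).hasGradientAt
  let z := x 0
  let bound (w : F) : ℝ := h y - h z - inner ℝ (gradient h z) (w - z)
  have hle (j : ℕ) :
      inner ℝ (‖gradient h (x j)‖⁻¹ • gradient h (x j)) (y - x j) ≤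
        ‖gradient h (x j)‖⁻¹ * bound (x j) := by
    have hy' := hconv.inner_sub_le_of_hasGradientAt (hxC j) hy (hgrad _ (hxC j))
    have hz' := hconv.inner_sub_le_of_hasGradientAt (hxC 0) (hxC j) (hgrad _ (hxC 0))
    rw [real_inner_smul_left]
    exact mul_le_mul_of_nonneg_left (by linarith) (by positivity)
  have hleft : Tendsto (fun j => inner ℝ (‖gradient h (x j)‖⁻¹ • gradient h (x j)) (y - x j))
      atTop (𝓝 (inner ℝ ν (y - x₀))) :=
    hdir.inner (tendsto_const_nhds.sub hlim)
  have hbound : Tendsto (fun j => bound (x j)) atTop (𝓝 (bound x₀)) :=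
    tendsto_const_nhds.sub (tendsto_const_nhds.inner (hlim.sub tendsto_const_nhds))
  have hright : Tendsto (fun j => ‖gradient h (x j)‖⁻¹ * bound (x j)) atTop (𝓝 0) := by
    simpa using hblow.inv_tendsto_atTop.mul hbound
  exact le_of_tendsto_of_tendsto' hleft hright hle

theorem stmt6_general (n : ℕ) (C : Set (E n)) (h : E n → ℝ)
    (hconv : ConvexOn ℝ C h) (hdiff : ∀ x ∈ C, DifferentiableAt ℝ h x)
    (xseq : ℕ → E n) (xstar : E n) (ν : E n)
    (hseqC : ∀ j, xseq j ∈ C)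
    (hlim : Tendsto xseq atTop (𝓝 xstar))
    (hblow : Tendsto (fun j => ‖gradient h (xseq j)‖) atTop atTop)
    (hdir : Tendsto (fun j => ‖gradient h (xseq j)‖⁻¹ • gradient h (xseq j)) atTop (𝓝 ν)) :
    ∀ y ∈ closure C, (inner ℝ ν (y - xstar) : ℝ) ≤ 0 := by
  have hhalfspace : IsClosed {y : E n | (inner ℝ ν (y - xstar) : ℝ) ≤ 0} :=
    isClosed_le (by fun_prop) continuous_const
  intro y hy
  refine closure_minimal (fun w hw => ?_) hhalfspace hy
  exact hconv.inner_sub_nonpos_of_tendsto_normalized_gradient hdiff hseqC hlim hblow hdir hw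

/-- Let `C ⊆ ℝⁿ` be a nonempty open convex set and `h` convex and
differentiable on `C`.  If `(xʲ) ⊆ C` converges to a boundary point `x*` of `C`, with
`‖∇h(xʲ)‖ → ∞` and `∇h(xʲ)/‖∇h(xʲ)‖ → ν`, then `ν ∈ N_{cl C}(x*)`, i.e.
`⟨ν, y − x*⟩ ≤ 0` for all `y ∈ cl C`. -/
theorem stmt6 (n : ℕ) (C : Set (E n)) (h : E n → ℝ)
    (hCne : C.Nonempty) (hCopen : IsOpen C) (hCconv : Convex ℝ C)
    (hconv : ConvexOn ℝ C h) (hdiff : ∀ x ∈ C, DifferentiableAt ℝ h x)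
    (xseq : ℕ → E n) (xstar : E n) (ν : E n)
    (hseqC : ∀ j, xseq j ∈ C)
    (hlim : Tendsto xseq atTop (𝓝 xstar))
    (hbd : xstar ∈ frontier C)
    (hblow : Tendsto (fun j => ‖gradient h (xseq j)‖) atTop atTop)
    (hdir : Tendsto (fun j => ‖gradient h (xseq j)‖⁻¹ • gradient h (xseq j)) atTop (𝓝 ν)) :
    ∀ y ∈ closure C, (inner ℝ ν (y - xstar) : ℝ) ≤ 0 :=
  stmt6_general n C h hconv hdiff xseq xstar ν hseqC hlim hblow hdir
end
end

section
/- Let C be a nonempty open convex subset of ℝⁿ and 𝒜 an affine subspace of ℝⁿ such that C ∩ 𝒜 ≠ ∅, and let 𝒜₀ = 𝒜 − 𝒜 be the direction space of 𝒜. If x* ∈ (bd C) ∩ 𝒜, then N_{cl C}(x*) ∩ 𝒜₀^⊥ = {0}. -/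
/-! A point `z ∈ C ∩ 𝒜` lies in the interior of `cl C`, and `⟪z - x*, ν⟫ = 0` for `ν ∈ 𝒜₀^⊥`.
So a normal `ν` to `cl C` at `x*` is also normal to `cl C` at the interior point `z`, which
forces `ν = 0`. -/

noncomputable section
open Set Filter Topology

open RealInnerProductSpace

section NormalCone

variable {F : Type*} [NormedAddCommGroup F] [InnerProductSpace ℝ F]

/-- `y ↦ ⟪y, ν⟫` has a local maximum at `z`, so its derivative `⟪·, ν⟫` vanishes. -/
theorem eq_zero_of_inner_sub_nonpos_of_mem_interior {s : Set F} {z ν : F}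
    (hz : z ∈ interior s) (hν : ∀ y ∈ s, ⟪y - z, ν⟫ ≤ 0) : ν = 0 := by
  have hmax : IsLocalMax (innerSL ℝ ν) z :=
    mem_of_superset (mem_interior_iff_mem_nhds.mp hz) fun y hy => by
      simpa [real_inner_comm ν, inner_sub_right, sub_nonpos] using hν y hy
  have hderiv : innerSL ℝ ν = 0 := hmax.hasFDerivAt_eq_zero (innerSL ℝ ν).hasFDerivAt
  simpa using congrArg (fun f => f ν) hderiv

theorem inner_sub_nonpos_of_inner_sub_eq_zero {s : Set F} {x z ν : F}
    (hν : ∀ y ∈ s, ⟪y - x, ν⟫ ≤ 0) (hzx : ⟪z - x, ν⟫ = 0) : ∀ y ∈ s, ⟪y - z, ν⟫ ≤ 0 := by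
  intro y hy
  have hsplit : ⟪y - z, ν⟫ = ⟪y - x, ν⟫ - ⟪z - x, ν⟫ := by
    rw [← inner_sub_left, sub_sub_sub_cancel_right]
  linarith [hν y hy]

end NormalCone

theorem stmt7_general (n : ℕ) (C : Set (E n)) (𝒜 : AffineSubspace ℝ (E n))
    (hCopen : IsOpen C)
    (hCA : (C ∩ (𝒜 : Set (E n))).Nonempty)
    (xstar : E n) (hxA : xstar ∈ 𝒜) :
    {ν : E n | ∀ y ∈ closure C, (inner ℝ (y - xstar) ν : ℝ) ≤ 0} ∩ (𝒜.directionᗮ : Set (E n))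
      = {0} := by
  refine Subset.antisymm ?_ (by simp)
  rintro ν ⟨hnormal, hperp⟩
  obtain ⟨z, hzC, hzA⟩ := hCA
  have hzx : ⟪z - xstar, ν⟫ = 0 :=
    (Submodule.mem_orthogonal _ _).mp hperp _ (AffineSubspace.vsub_mem_direction hzA hxA)
  have hz : z ∈ interior (closure C) := hCopen.subset_interior_closure hzC
  exact eq_zero_of_inner_sub_nonpos_of_mem_interior hz
    (inner_sub_nonpos_of_inner_sub_eq_zero hnormal hzx)

/-- Let `C` be a nonempty open convex subset of `ℝⁿ` and `𝒜` an affine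
subspace with `C ∩ 𝒜 ≠ ∅` and direction space `𝒜₀`.  If `x* ∈ (bd C) ∩ 𝒜` then
`N_{cl C}(x*) ∩ 𝒜₀^⊥ = {0}`. -/
theorem stmt7 (n : ℕ) (C : Set (E n)) (𝒜 : AffineSubspace ℝ (E n))
    (hCne : C.Nonempty) (hCopen : IsOpen C) (hCconv : Convex ℝ C)
    (hCA : (C ∩ (𝒜 : Set (E n))).Nonempty)
    (xstar : E n) (hx : xstar ∈ frontier C) (hxA : xstar ∈ 𝒜) :
    {ν : E n | ∀ y ∈ closure C, (inner ℝ (y - xstar) ν : ℝ) ≤ 0} ∩ (𝒜.directionᗮ : Set (E n))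
      = {0} :=
  stmt7_general n C 𝒜 hCopen hCA xstar hxA
end
end

section
/- Let B be a real p×n matrix of full rank n with rows B₁, …, B_p (p ≥ n), d ∈ ℝᵖ, c ∈ ℝⁿ, and suppose the linear program min{⟨c, x⟩ : Bx ≥ d} admits a unique optimal solution a. Then the function 𝒩(x) = Σ_{i=1}^{p} |⟨B_i, x⟩| is a norm on ℝⁿ, and there exists k₀ > 0 such that for every y ∈ ℝⁿ with By ≥ d one has ⟨c, y − a⟩ ≥ k₀ 𝒩(y − a). -/
/-!
Since `B` has full column rank, `x ↦ B x` is injective, so `𝒩(x) = ‖B x‖₁` is a norm.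
At the unique optimum `a`, every nonzero direction `v` that keeps the constraints active at `a`
satisfied has `⟨c, v⟩ > 0`: a short step `a + t v` is feasible, so `⟨c, v⟩ ≥ 0`, and equality
would make it a second optimum. These directions form a closed cone containing every `y - a`
with `y` feasible, and minimising `⟨c, ·⟩` over its compact intersection with the unit sphere
gives `⟨c, v⟩ ≥ k ‖v‖` on the cone; all norms on `ℝⁿ` being equivalent, this bounds `𝒩` too.
-/

noncomputable section
open Set Filter Topology Matrix

theorem Matrix.mulVec_injective_iff_rank_eq {m n K : Type*} [Field K] [Fintype n]
    (B : Matrix m n K) : Function.Injective B.mulVec ↔ B.rank = Fintype.card n := by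
  rw [mulVec_injective_iff, linearIndependent_iff_card_eq_finrank_span,
    rank_eq_finrank_span_cols, eq_comm]
  rfl

theorem exists_pos_mul_norm_le_of_pos_on_cone {V : Type*} [NormedAddCommGroup V]
    [NormedSpace ℝ V] [FiniteDimensional ℝ V] {K : Set V} (hK : IsClosed K)
    (hKsmul : ∀ v ∈ K, ∀ r : ℝ, 0 < r → r • v ∈ K) (f : V →ₗ[ℝ] ℝ)
    (hf : ∀ v ∈ K, v ≠ 0 → 0 < f v) :
    ∃ k > 0, ∀ v ∈ K, k * ‖v‖ ≤ f v := by
  set S := K ∩ Metric.sphere 0 1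
  have hnormalize : ∀ v ∈ K, v ≠ 0 → ‖v‖⁻¹ • v ∈ S := fun v hv hv0 =>
    ⟨hKsmul v hv _ (by positivity), by simp [norm_smul, hv0]⟩
  rcases S.eq_empty_or_nonempty with hS | hS
  · refine ⟨1, one_pos, fun v hv => ?_⟩
    obtain rfl : v = 0 := by
      by_contra hv0
      exact hS.subset (hnormalize v hv hv0)
    simp
  obtain ⟨v₀, ⟨hv₀K, hv₀⟩, hmin⟩ := ((isCompact_sphere 0 1).inter_left hK).exists_isMinOn hS
    (LinearMap.continuous_of_finiteDimensional f).continuousOn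
  have hv₀0 : v₀ ≠ 0 := by rintro rfl; simp at hv₀
  refine ⟨f v₀, hf v₀ hv₀K hv₀0, fun v hv => ?_⟩
  rcases eq_or_ne v 0 with rfl | hv0
  · simp
  have : f v₀ ≤ f (‖v‖⁻¹ • v) := hmin (hnormalize v hv hv0)
  rw [map_smul, smul_eq_mul] at this
  rwa [le_inv_mul_iff₀ (norm_pos_iff.mpr hv0), mul_comm] at this

section LinearProgram

variable {V ι : Type*} [AddCommGroup V] [Module ℝ V]
  (A : V →ₗ[ℝ] ι → ℝ) (d : ι → ℝ) (a : V)

def feasibleDirectionCone : Set V := {v | ∀ i, A a i = d i → 0 ≤ A v i}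

variable {A d a}

theorem sub_mem_feasibleDirectionCone {y : V} (hy : d ≤ A y) :
    y - a ∈ feasibleDirectionCone A d a := fun i hi => by
  simpa [hi] using hy i

theorem smul_mem_feasibleDirectionCone {v : V} (hv : v ∈ feasibleDirectionCone A d a) {r : ℝ}
    (hr : 0 ≤ r) :
    r • v ∈ feasibleDirectionCone A d a := fun i hi => by
  simpa using mul_nonneg hr (hv i hi)

theorem exists_pos_le_map_add_smul [Finite ι] (ha : d ≤ A a) {v : V}
    (hv : v ∈ feasibleDirectionCone A d a) : ∃ t > (0 : ℝ), d ≤ A (a + t • v) := by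
  have hstep : ∀ i, ∀ᶠ t in 𝓝[>] (0 : ℝ), d i ≤ A a i + t * A v i := by
    intro i
    rcases (ha i).eq_or_lt with hi | hi
    · filter_upwards [self_mem_nhdsWithin] with t ht
      nlinarith [hv i hi.symm, mem_Ioi.mp ht]
    · have hcont : Continuous fun t : ℝ => A a i + t * A v i := by fun_prop
      have := (hcont.tendsto 0).eventually (eventually_gt_nhds (by simpa using hi))
      exact (this.filter_mono nhdsWithin_le_nhds).mono fun t ht => ht.le
  obtain ⟨t, ht, hfeas⟩ := (eventually_mem_nhdsWithin.and (eventually_all.mpr hstep)).exists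
  exact ⟨t, ht, fun i => by simpa using hfeas i⟩

theorem pos_of_mem_feasibleDirectionCone [Finite ι] {f : V →ₗ[ℝ] ℝ} (ha : d ≤ A a)
    (hopt : ∀ y, d ≤ A y → f a ≤ f y) (huniq : ∀ y, d ≤ A y → f y = f a → y = a)
    {v : V} (hv : v ∈ feasibleDirectionCone A d a) (hv0 : v ≠ 0) : 0 < f v := by
  obtain ⟨t, ht, hfeas⟩ := exists_pos_le_map_add_smul ha hv
  have hle : f a ≤ f a + t * f v := by simpa using hopt _ hfeas
  refine (nonneg_of_mul_nonneg_right (by linarith) ht).lt_of_ne fun hfv => hv0 ?_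
  have : a + t • v = a := huniq _ hfeas (by simp [← hfv])
  simpa [ht.ne'] using this

end LinearProgram

theorem isClosed_feasibleDirectionCone {V ι : Type*} [NormedAddCommGroup V] [NormedSpace ℝ V]
    [FiniteDimensional ℝ V] (A : V →ₗ[ℝ] ι → ℝ) (d : ι → ℝ) (a : V) :
    IsClosed (feasibleDirectionCone A d a) := by
  have hA := LinearMap.continuous_of_finiteDimensional A
  simp only [feasibleDirectionCone, ofPred_forall]
  refine isClosed_iInter fun i => ?_
  by_cases hi : A a i = d i
  · simpa [hi] using isClosed_le continuous_const ((continuous_apply i).comp hA)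
  · simp [hi]

theorem exists_pos_mul_norm_sub_le_of_unique_optimum {V ι : Type*} [NormedAddCommGroup V]
    [NormedSpace ℝ V] [FiniteDimensional ℝ V] [Finite ι] {A : V →ₗ[ℝ] ι → ℝ} {d : ι → ℝ} {a : V}
    {f : V →ₗ[ℝ] ℝ} (ha : d ≤ A a)
    (hopt : ∀ y, d ≤ A y → f a ≤ f y) (huniq : ∀ y, d ≤ A y → f y = f a → y = a) :
    ∃ k > 0, ∀ y, d ≤ A y → k * ‖y - a‖ ≤ f (y - a) := by
  obtain ⟨k, hk, hbound⟩ := exists_pos_mul_norm_le_of_pos_on_cone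
    (isClosed_feasibleDirectionCone A d a)
    (fun v hv r hr => smul_mem_feasibleDirectionCone hv hr.le) f
    (fun v hv hv0 => pos_of_mem_feasibleDirectionCone ha hopt huniq hv hv0)
  exact ⟨k, hk, fun y hy => hbound _ (sub_mem_feasibleDirectionCone hy)⟩

theorem stmt14_general (n p : ℕ)
    (B : Matrix (Fin p) (Fin n) ℝ) (hrank : B.rank = n)
    (d : Fin p → ℝ) (c : E n) (a : E n)
    -- `a` is the unique optimal solution of the linear program
    (haF : ∀ i, d i ≤ B.mulVec a i)
    (hopt : ∀ y : E n, (∀ i, d i ≤ B.mulVec y i) → (inner ℝ c a : ℝ) ≤ (inner ℝ c y : ℝ))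
    (huniq : ∀ y : E n, (∀ i, d i ≤ B.mulVec y i) →
      (inner ℝ c y : ℝ) = (inner ℝ c a : ℝ) → y = a) :
    -- `𝒩` is a norm on `ℝⁿ` ...
    (∀ x : E n, 0 ≤ ∑ i, |B.mulVec x i|) ∧
    (∀ x : E n, (∑ i, |B.mulVec x i|) = 0 ↔ x = 0) ∧
    (∀ x y : E n, (∑ i, |B.mulVec (x + y) i|) ≤ (∑ i, |B.mulVec x i|) + ∑ i, |B.mulVec y i|) ∧
    (∀ (r : ℝ) (x : E n), (∑ i, |B.mulVec (r • x) i|) = |r| * ∑ i, |B.mulVec x i|) ∧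
    -- ... and the linear growth estimate holds
    (∃ k₀ > (0:ℝ), ∀ y : E n, (∀ i, d i ≤ B.mulVec y i) →
      k₀ * (∑ i, |B.mulVec (y - a) i|) ≤ (inner ℝ c (y - a) : ℝ)) := by
  set A : E n →ₗ[ℝ] Fin p → ℝ := B.mulVecLin ∘ₗ (WithLp.linearEquiv 2 ℝ (Fin n → ℝ)).toLinearMap
  set T := (WithLp.linearEquiv 1 ℝ (Fin p → ℝ)).symm.toLinearMap ∘ₗ A
  have hT : Function.Injective T := (WithLp.toLp_injective 1).comp <|
    ((B.mulVec_injective_iff_rank_eq).mpr (by simpa using hrank)).comp (WithLp.ofLp_injective 2)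
  have hN : ∀ x : E n, ∑ i, |B.mulVec x i| = ‖T x‖ := fun x => by
    simp [T, A, PiLp.norm_eq_of_L1]
  refine ⟨fun x => hN x ▸ norm_nonneg _,
    fun x => by rw [hN, norm_eq_zero, map_eq_zero_iff T hT],
    fun x y => by
      rw [hN, hN, hN]; exact (congrArg norm (map_add T x y)).trans_le (norm_add_le _ _),
    fun r x => by rw [hN, hN, ← Real.norm_eq_abs, ← norm_smul, ← map_smul]; rfl, ?_⟩
  obtain ⟨k, hk, hgrowth⟩ :=
    exists_pos_mul_norm_sub_le_of_unique_optimum (A := A) (f := innerₛₗ ℝ c) haF hopt huniq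
  obtain ⟨C, hC, hTC⟩ := (LinearMap.toContinuousLinearMap T).bound
  refine ⟨k / C, by positivity, fun y hy => ?_⟩
  rw [hN]
  calc k / C * ‖T (y - a)‖ ≤ k / C * (C * ‖y - a‖) := by gcongr; exact hTC _
    _ = k * ‖y - a‖ := by field_simp
    _ ≤ inner ℝ c (y - a) := hgrowth y hy

/-- Lemma `L:norm`.  If the linear program `min{⟨c,x⟩ : Bx ≥ d}` with
`B` a full rank `p×n` matrix (`p ≥ n`) has the unique optimal solution `a`, then
`𝒩(x) = Σᵢ |⟨Bᵢ,x⟩|` is a norm on `ℝⁿ` and there is `k₀ > 0` such that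
`⟨c, y − a⟩ ≥ k₀ 𝒩(y − a)` for all feasible `y`. -/
theorem stmt14 (n p : ℕ) (hnp : n ≤ p)
    (B : Matrix (Fin p) (Fin n) ℝ) (hrank : B.rank = n)
    (d : Fin p → ℝ) (c : E n) (a : E n)
    -- `a` is the unique optimal solution of the linear program
    (haF : ∀ i, d i ≤ B.mulVec a i)
    (hopt : ∀ y : E n, (∀ i, d i ≤ B.mulVec y i) → (inner ℝ c a : ℝ) ≤ (inner ℝ c y : ℝ))
    (huniq : ∀ y : E n, (∀ i, d i ≤ B.mulVec y i) →
      (inner ℝ c y : ℝ) = (inner ℝ c a : ℝ) → y = a) :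
    -- `𝒩` is a norm on `ℝⁿ` ...
    (∀ x : E n, 0 ≤ ∑ i, |B.mulVec x i|) ∧
    (∀ x : E n, (∑ i, |B.mulVec x i|) = 0 ↔ x = 0) ∧
    (∀ x y : E n, (∑ i, |B.mulVec (x + y) i|) ≤ (∑ i, |B.mulVec x i|) + ∑ i, |B.mulVec y i|) ∧
    (∀ (r : ℝ) (x : E n), (∑ i, |B.mulVec (r • x) i|) = |r| * ∑ i, |B.mulVec x i|) ∧
    -- ... and the linear growth estimate holds
    (∃ k₀ > (0:ℝ), ∀ y : E n, (∀ i, d i ≤ B.mulVec y i) →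
      k₀ * (∑ i, |B.mulVec (y - a) i|) ≤ (inner ℝ c (y - a) : ℝ)) :=
  stmt14_general n p B hrank d c a haF hopt huniq
end
end
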